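/- arXiv:1302.3095 — 3 statements merged into one kernel-verified Lean document; each statement's English description precedes it below -/
import Mathlib

section
/- Let f : ℝ → ℝ be C^∞ on an open set containing α, with f(α) = 0 and f'(α) ≠ 0. Let G : ℝ → ℝ and H : ℝ × ℝ × ℝ → ℝ be C^∞ functions satisfying G(0) = 1, G'(0) = 2, H(0,0,0) = 1 and ∂H/∂t₁(0,0,0) = 2. For x near α define y(x) = x − f(x)/f'(x), z(x) = y(x) − G(f(y(x))/f(x))·f(y(x))/f'(x), and Φ(x) = z(x) − H(f(y(x))/f(x), f(z(x))/f(x), f(z(x))/f(y(x)))·f(z(x))/f'(x). Then there exist δ > 0 and C > 0 such that for every x with 0 < |x − α| < δ at which f(x) ≠ 0 and f(y(x)) ≠ 0, one has |Φ(x) − α| ≤ C·|x − α|^6 (i.e., the three-point scheme has local convergence order at least six). -/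
open Topology Filter Asymptotics Set

section Helpers

private lemma abs_sub_le_of_uIcc' {a x y : ℝ} (hy : y ∈ Set.uIcc a x) : |y - a| ≤ |x - a| := by
  rcases le_total a x with h | h
  · rw [Set.uIcc_of_le h] at hy
    rw [abs_of_nonneg (by linarith [hy.1]), abs_of_nonneg (by linarith)]
    linarith [hy.2]
  · rw [Set.uIcc_of_ge h] at hy
    rw [abs_of_nonpos (by linarith [hy.2]), abs_of_nonpos (by linarith)]
    linarith [hy.1]

private lemma mvt_bigO' {g g' : ℝ → ℝ} {a : ℝ} {k : ℕ}
    (h0 : g a = 0)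
    (hg : ∀ᶠ x in 𝓝 a, HasDerivAt g (g' x) x)
    (hO : g' =O[𝓝 a] fun x => (x - a) ^ k) :
    g =O[𝓝 a] fun x => (x - a) ^ (k + 1) := by
  rcases hO.exists_pos with ⟨C, hC0, hC⟩
  have h := hg.and hC.bound
  rcases Metric.eventually_nhds_iff_ball.mp h with ⟨ε, hε, hball⟩
  rw [isBigO_iff]
  refine ⟨C, Metric.eventually_nhds_iff_ball.mpr ⟨ε, hε, fun x hx => ?_⟩⟩
  have hsub : Set.uIcc a x ⊆ Metric.ball a ε := by
    intro u hu
    have := abs_sub_le_of_uIcc' hu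
    rw [Metric.mem_ball, Real.dist_eq]
    rw [Metric.mem_ball, Real.dist_eq] at hx
    linarith
  have key := (convex_uIcc a x).norm_image_sub_le_of_norm_hasDerivWithin_le
    (f := g) (f' := g') (C := C * |x - a| ^ k)
    (fun u hu => ((hball u (hsub hu)).1).hasDerivWithinAt)
    (fun u hu => by
      have hb := (hball u (hsub hu)).2
      calc ‖g' u‖ ≤ C * ‖(u - a) ^ k‖ := hb
        _ ≤ C * |x - a| ^ k := by
            rw [norm_pow, Real.norm_eq_abs]
            exact mul_le_mul_of_nonneg_left
              (pow_le_pow_left₀ (abs_nonneg _) (abs_sub_le_of_uIcc' hu) k) hC0.le)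
    Set.left_mem_uIcc Set.right_mem_uIcc
  rw [h0, sub_zero] at key
  calc ‖g x‖ ≤ C * |x - a| ^ k * ‖x - a‖ := key
    _ = C * ‖(x - a) ^ (k + 1)‖ := by
        rw [norm_pow, Real.norm_eq_abs, pow_succ]; ring

private lemma deriv_bigO' {φ : ℝ → ℝ} {a c : ℝ} (h : HasDerivAt φ c a) :
    (fun x => φ x - φ a - c * (x - a)) =O[𝓝 a] fun x => (x - a) ^ 1 := by
  have h1 := (hasDerivAt_iff_isLittleO.mp h).isBigO
  have e1 : (fun x => φ x - φ a - c * (x - a)) = fun x => φ x - φ a - (x - a) • c := by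
    funext x; simp [smul_eq_mul]; ring
  have e2 : (fun x : ℝ => (x - a) ^ 1) = fun x => x - a := by funext x; ring
  rw [e1, e2]; exact h1

private lemma isBigO_div_aux' {l : Filter ℝ} {u v w : ℝ → ℝ}
    (h : u =O[l] fun x => v x * w x) (hv : ∀ᶠ x in l, v x ≠ 0) :
    (fun x => u x / v x) =O[l] w := by
  have h2 := h.mul (isBigO_refl (fun x => (v x)⁻¹) l)
  refine h2.congr' (by filter_upwards with x using (div_eq_mul_inv _ _).symm) ?_
  filter_upwards [hv] with x hx
  field_simp

private lemma isBigO_pow_pow_aux' {l : Filter ℝ} {α : ℝ}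
    (ht : Tendsto (fun x => x - α) l (𝓝 0)) {j k : ℕ} (h : j ≤ k) :
    (fun x => (x - α) ^ k) =O[l] fun x => (x - α) ^ j := by
  rw [isBigO_iff]
  refine ⟨1, ?_⟩
  have h1 : ∀ᶠ x in l, |x - α| ≤ 1 := by
    have h2 : ∀ᶠ t in 𝓝 (0 : ℝ), |t| ≤ 1 := by
      filter_upwards [Metric.ball_mem_nhds (0 : ℝ) one_pos] with t htt
      rw [Metric.mem_ball, Real.dist_eq, sub_zero] at htt
      exact htt.le
    exact ht.eventually h2
  filter_upwards [h1] with x hx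
  rw [norm_pow, norm_pow, Real.norm_eq_abs, one_mul]
  exact pow_le_pow_of_le_one (abs_nonneg _) hx h

private lemma key_step' {l : Filter ℝ} {α A c : ℝ} (hA : A ≠ 0)
    {p q g v : ℝ → ℝ}
    (hv : (fun x => v x - A⁻¹ + 2 * c * A⁻¹ * (x - α)) =O[l] fun x => (x - α) ^ 2)
    (hvb : v =O[l] fun _ => (1 : ℝ))
    (hE : Tendsto (fun x => x - α) l (𝓝 0))
    (hq : (fun x => q x - A * p x) =O[l] fun x => p x * (x - α) ^ 2)
    (hg : (fun x => g x - 1 - 2 * c * (x - α)) =O[l] fun x => (x - α) ^ 2) :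
    (fun x => p x - g x * (q x * v x)) =O[l] fun x => p x * (x - α) ^ 2 := by
  have he1 : (fun x : ℝ => x - α) =O[l] fun _ => (1 : ℝ) := hE.isBigO_one ℝ
  have hE2t : Tendsto (fun x : ℝ => (x - α) ^ 2) l (𝓝 0) := by
    simpa using hE.pow 2
  have hE2b : (fun x : ℝ => (x - α) ^ 2) =O[l] fun _ => (1 : ℝ) := hE2t.isBigO_one ℝ
  have gb : g =O[l] fun _ => (1 : ℝ) := by
    have h1 : (fun x => (g x - 1 - 2 * c * (x - α)) + 1 + 2 * c * (x - α))
        =O[l] fun _ => (1 : ℝ) :=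
      ((hg.trans hE2b).add (isBigO_refl _ l)).add (he1.const_mul_left (2 * c))
    exact h1.congr_left fun x => by ring
  have hAb : (fun x : ℝ => A⁻¹ - 2 * c * A⁻¹ * (x - α)) =O[l] fun _ => (1 : ℝ) := by
    refine Filter.Tendsto.isBigO_one ℝ (c := A⁻¹) ?_
    have := hE.const_mul (2 * c * A⁻¹)
    simpa using tendsto_const_nhds.sub this
  have hρ : (fun x => g x * v x - A⁻¹) =O[l] fun x => (x - α) ^ 2 := by
    have hid : ∀ x, g x * v x - A⁻¹ =
        -(4 * c ^ 2 * A⁻¹) * (x - α) ^ 2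
          + (g x - 1 - 2 * c * (x - α)) * (A⁻¹ - 2 * c * A⁻¹ * (x - α))
          + g x * (v x - A⁻¹ + 2 * c * A⁻¹ * (x - α)) := fun x => by ring
    have T1 : (fun x : ℝ => -(4 * c ^ 2 * A⁻¹) * (x - α) ^ 2) =O[l] fun x => (x - α) ^ 2 :=
      (isBigO_refl _ l).const_mul_left _
    have T2 : (fun x => (g x - 1 - 2 * c * (x - α)) * (A⁻¹ - 2 * c * A⁻¹ * (x - α)))
        =O[l] fun x => (x - α) ^ 2 := by
      have := hg.mul hAb
      simpa using this
    have T3 : (fun x => g x * (v x - A⁻¹ + 2 * c * A⁻¹ * (x - α)))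
        =O[l] fun x => (x - α) ^ 2 := by
      have := gb.mul hv
      simpa using this
    exact ((T1.add T2).add T3).congr_left fun x => (hid x).symm
  have hgv : (fun x => g x * v x) =O[l] fun _ => (1 : ℝ) := by
    have := gb.mul hvb; simpa using this
  have hAA : A * A⁻¹ = 1 := mul_inv_cancel₀ hA
  have hid2 : ∀ x, p x - g x * (q x * v x) =
      -A * ((g x * v x - A⁻¹) * p x) - (g x * v x) * (q x - A * p x) := fun x => by
    linear_combination (-(p x)) * hAA
  have T1 : (fun x => -A * ((g x * v x - A⁻¹) * p x)) =O[l] fun x => p x * (x - α) ^ 2 := by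
    have := (hρ.mul (isBigO_refl p l)).const_mul_left (-A)
    exact this.trans (((isBigO_refl _ l).congr_left fun x => by ring) :
      (fun x => (x - α) ^ 2 * p x) =O[l] fun x => p x * (x - α) ^ 2)
  have T2 : (fun x => (g x * v x) * (q x - A * p x)) =O[l] fun x => p x * (x - α) ^ 2 := by
    have := hgv.mul hq
    simpa using this
  exact (T1.sub T2).congr_left fun x => (hid2 x).symm

end Helpers

/-- Theorem 1 (sixth order part) for scheme (FD1):
`y = x - f x / f' x`, `z = y - G t₁ · f y / f' x`,
`Φ = z - H t₁ t₂ t₃ · f z / f' x`, with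
`t₁ = f y / f x`, `t₂ = f z / f x`, `t₃ = f z / f y`.
Under `G 0 = 1`, `G' 0 = 2`, `H 0 0 0 = 1`, `∂H/∂t₁ (0,0,0) = 2`
the scheme has local convergence order at least six. -/
theorem fd1_order_six
    (f G : ℝ → ℝ) (H : ℝ → ℝ → ℝ → ℝ) (α : ℝ)
    (U : Set ℝ) (hU : IsOpen U) (hαU : α ∈ U)
    (hf : ContDiffOn ℝ (⊤ : ℕ∞) f U)
    (hroot : f α = 0) (hf'α : deriv f α ≠ 0)
    (hG : ContDiff ℝ (⊤ : ℕ∞) G)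
    (hH : ContDiff ℝ (⊤ : ℕ∞) (fun p : ℝ × ℝ × ℝ => H p.1 p.2.1 p.2.2))
    (hG0 : G 0 = 1) (hG1 : deriv G 0 = 2)
    (hH0 : H 0 0 0 = 1)
    (hH1 : deriv (fun t₁ => H t₁ 0 0) 0 = 2)
    (y z Φ : ℝ → ℝ)
    (hy : ∀ x, y x = x - f x / deriv f x)
    (hz : ∀ x, z x = y x - G (f (y x) / f x) * (f (y x) / deriv f x))
    (hΦ : ∀ x, Φ x = z x -
      H (f (y x) / f x) (f (z x) / f x) (f (z x) / f (y x)) * (f (z x) / deriv f x)) :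
    ∃ δ > 0, ∃ C > 0, ∀ x : ℝ, 0 < |x - α| → |x - α| < δ →
      f x ≠ 0 → f (y x) ≠ 0 → |Φ x - α| ≤ C * |x - α| ^ 6 := by
  set d : ℝ → ℝ := deriv f with hd_def
  obtain ⟨A, hAα⟩ : ∃ A, d α = A := ⟨_, rfl⟩
  have hA : A ≠ 0 := hAα ▸ hf'α
  obtain ⟨B, hBα⟩ : ∃ B, deriv d α = B := ⟨_, rfl⟩
  obtain ⟨c, hc_def⟩ : ∃ c, c = B / (2 * A) := ⟨_, rfl⟩
  have hUn : U ∈ 𝓝 α := hU.mem_nhds hαU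
  -- basic differentiability
  have hdC : ContDiffOn ℝ (⊤ : ℕ∞) d U := hf.deriv_of_isOpen hU (by simp)
  have hd2C : ContDiffOn ℝ (⊤ : ℕ∞) (deriv d) U := hdC.deriv_of_isOpen hU (by simp)
  have hEvDeriv : ∀ g : ℝ → ℝ, ContDiffOn ℝ (⊤ : ℕ∞) g U →
      ∀ᶠ x in 𝓝 α, HasDerivAt g (deriv g x) x := by
    intro g hg
    filter_upwards [hUn] with x hx
    have : DifferentiableAt ℝ g x :=
      (hg.differentiableOn (by simp)).differentiableAt (hU.mem_nhds hx)
    exact this.hasDerivAt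
  have hfd : ∀ᶠ x in 𝓝 α, HasDerivAt f (d x) x := hEvDeriv f hf
  have hdd : ∀ᶠ x in 𝓝 α, HasDerivAt d (deriv d x) x := hEvDeriv d hdC
  have hd2d : ∀ᶠ x in 𝓝 α, HasDerivAt (deriv d) (deriv (deriv d) x) x := hEvDeriv _ hd2C
  have hdB : HasDerivAt d B α := hBα ▸ hdd.self_of_nhds
  have hd2a : HasDerivAt (deriv d) (deriv (deriv d) α) α := hd2d.self_of_nhds
  -- Taylor-type expansions at α
  have hd1 : (fun x => d x - A) =O[𝓝 α] fun x => (x - α) ^ 1 := by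
    have h1 := deriv_bigO' hdB
    have h2 : (fun x : ℝ => B * (x - α)) =O[𝓝 α] fun x => (x - α) ^ 1 := by
      have := (isBigO_refl (fun x : ℝ => (x - α) ^ 1) (𝓝 α)).const_mul_left B
      simpa [pow_one] using this
    exact (h1.add h2).congr_left fun x => by rw [← hAα]; ring
  have hd2e : (fun x => deriv d x - B) =O[𝓝 α] fun x => (x - α) ^ 1 := by
    have h1 := deriv_bigO' hd2a
    have h2 : (fun x : ℝ => deriv (deriv d) α * (x - α)) =O[𝓝 α] fun x => (x - α) ^ 1 := by
      have := (isBigO_refl (fun x : ℝ => (x - α) ^ 1) (𝓝 α)).const_mul_left (deriv (deriv d) α)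
      simpa [pow_one] using this
    exact (h1.add h2).congr_left fun x => by rw [← hBα]; ring
  have h2 : (fun x => d x - A - B * (x - α)) =O[𝓝 α] fun x => (x - α) ^ 2 := by
    refine mvt_bigO' (by rw [← hAα]; ring) ?_ hd2e
    filter_upwards [hdd] with x hx
    have hb : HasDerivAt (fun x : ℝ => A + B * (x - α)) B x := by
      simpa using (((hasDerivAt_id x).sub_const α).const_mul B).const_add A
    have hx' := hx.sub hb
    have heq : (fun x => d x - (A + B * (x - α))) = fun x => d x - A - B * (x - α) := by
      funext u; ring
    rw [← heq]
    exact hx'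
  have h3 : (fun x => f x - A * (x - α) - B / 2 * (x - α) ^ 2) =O[𝓝 α]
      fun x => (x - α) ^ 3 := by
    refine mvt_bigO' (by simp [hroot]) ?_ h2
    filter_upwards [hfd] with x hx
    have hb : HasDerivAt (fun x : ℝ => A * (x - α) + B / 2 * (x - α) ^ 2)
        (A + B * (x - α)) x := by
      have h1 : HasDerivAt (fun x : ℝ => A * (x - α)) A x := by
        simpa using ((hasDerivAt_id x).sub_const α).const_mul A
      have h2' : HasDerivAt (fun x : ℝ => B / 2 * (x - α) ^ 2) (B * (x - α)) x := by
        have h0 : HasDerivAt (fun x : ℝ => (x - α) ^ 2) (2 * (x - α)) x := by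
          simpa using ((hasDerivAt_id x).sub_const α).fun_pow 2
        have h0' := h0.const_mul (B / 2)
        have : B / 2 * (2 * (x - α)) = B * (x - α) := by ring
        rw [this] at h0'
        exact h0'
      exact h1.add h2'
    have hx' := hx.sub hb
    have heq : (fun x => f x - (A * (x - α) + B / 2 * (x - α) ^ 2))
        = fun x => f x - A * (x - α) - B / 2 * (x - α) ^ 2 := by
      funext u; ring
    have heq2 : d x - (A + B * (x - α)) = d x - A - B * (x - α) := by ring
    rw [← heq, ← heq2]
    exact hx'
  have h4 : (fun u => f u - A * (u - α)) =O[𝓝 α] fun u => (u - α) ^ 2 := by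
    refine mvt_bigO' (by simp [hroot]) ?_ hd1
    filter_upwards [hfd] with x hx
    have h1 : HasDerivAt (fun x : ℝ => A * (x - α)) A x := by
      simpa using ((hasDerivAt_id x).sub_const α).const_mul A
    have hx' := hx.sub h1
    have heq : d x - A = d x - A := rfl
    exact hx'
  -- expansion of G and H(.,0,0) at 0
  have hexp1D : ∀ g : ℝ → ℝ, ContDiff ℝ (⊤ : ℕ∞) g → g 0 = 1 → deriv g 0 = 2 →
      (fun t => g t - 1 - 2 * t) =O[𝓝 (0:ℝ)] fun t => t ^ 2 := by
    intro g hg hg0 hg1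
    have hgd : Differentiable ℝ g := hg.differentiable (by simp)
    have hgC : ContDiffOn ℝ (⊤ : ℕ∞) (deriv g) Set.univ :=
      hg.contDiffOn.deriv_of_isOpen isOpen_univ (by simp)
    have hgd2 : DifferentiableAt ℝ (deriv g) 0 :=
      (hgC.differentiableOn (by simp)).differentiableAt Filter.univ_mem
    have hD : (fun t => deriv g t - 2) =O[𝓝 (0:ℝ)] fun t => (t - 0) ^ 1 := by
      have h1 := deriv_bigO' hgd2.hasDerivAt
      have hb : (fun t : ℝ => deriv (deriv g) 0 * (t - 0)) =O[𝓝 (0:ℝ)]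
          fun t => (t - 0) ^ 1 := by
        have := (isBigO_refl (fun t : ℝ => (t - 0) ^ 1) (𝓝 0)).const_mul_left
          (deriv (deriv g) 0)
        simpa [pow_one] using this
      exact (h1.add hb).congr_left fun t => by rw [hg1]; ring
    have hmain : (fun t => g t - 1 - 2 * t) =O[𝓝 (0:ℝ)] fun t => (t - 0) ^ (1 + 1) := by
      refine mvt_bigO' (by simp [hg0]) ?_ hD
      filter_upwards with t
      have hb : HasDerivAt (fun t : ℝ => 1 + 2 * t) 2 t := by
        simpa using ((hasDerivAt_id t).const_mul 2).const_add 1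
      have hx' := (hgd t).hasDerivAt.sub hb
      have heq : (fun t => g t - (1 + 2 * t)) = fun t => g t - 1 - 2 * t := by
        funext u; ring
      rw [← heq]
      exact hx'
    exact hmain.congr (fun t => rfl) fun t => by ring
  have hGe : (fun t => G t - 1 - 2 * t) =O[𝓝 (0:ℝ)] fun t => t ^ 2 := hexp1D G hG hG0 hG1
  have hHcC : ContDiff ℝ (⊤ : ℕ∞) (fun t : ℝ => H t 0 0) :=
    hH.comp (contDiff_id.prodMk (contDiff_const.prodMk contDiff_const))
  have hHe : (fun t => H t 0 0 - 1 - 2 * t) =O[𝓝 (0:ℝ)] fun t => t ^ 2 :=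
    hexp1D _ hHcC hH0 hH1
  -- the filter of interest
  set S : Set ℝ := {x | f x ≠ 0 ∧ f (y x) ≠ 0} with hS_def
  set l : Filter ℝ := (𝓝[≠] α) ⊓ 𝓟 S with hl_def
  have hl_le : l ≤ 𝓝 α := le_trans inf_le_left nhdsWithin_le_nhds
  have hne : ∀ᶠ x in l, x ≠ α := by
    have h1 : ∀ᶠ x in 𝓝[≠] α, x ≠ α := by
      filter_upwards [self_mem_nhdsWithin] with x hx
      simpa using hx
    exact h1.filter_mono inf_le_left
  have hSmem : ∀ᶠ x in l, f x ≠ 0 ∧ f (y x) ≠ 0 := by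
    have h1 : ∀ᶠ x in 𝓟 S, f x ≠ 0 ∧ f (y x) ≠ 0 := by
      rw [eventually_principal]; exact fun x hx => hx
    exact h1.filter_mono inf_le_right
  have hfx0 : ∀ᶠ x in l, f x ≠ 0 := hSmem.mono fun x h => h.1
  have hfy0 : ∀ᶠ x in l, f (y x) ≠ 0 := hSmem.mono fun x h => h.2
  have tid : Tendsto (fun x : ℝ => x) l (𝓝 α) := tendsto_id.mono_left hl_le
  have tE : Tendsto (fun x => x - α) l (𝓝 0) := by
    simpa using tid.sub_const α
  have tcont : ∀ g : ℝ → ℝ, ContDiffOn ℝ (⊤ : ℕ∞) g U → Tendsto g l (𝓝 (g α)) := fun g hg =>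
    ((hg.continuousOn.continuousAt hUn).tendsto).mono_left hl_le
  have td : Tendsto d l (𝓝 A) := by
    have := tcont d hdC; rwa [hAα] at this
  have tf : Tendsto f l (𝓝 0) := by
    have := tcont f hf; rwa [hroot] at this
  have hd0 : ∀ᶠ x in l, d x ≠ 0 := td.eventually_ne hA
  have ty : Tendsto y l (𝓝 α) := by
    have h1 : Tendsto (fun x => x - f x / d x) l (𝓝 (α - 0 / A)) := tid.sub (tf.div td hA)
    have h2 := h1.congr fun x => (hy x).symm
    simpa using h2
  have hyne : ∀ᶠ x in l, y x ≠ α := by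
    filter_upwards [hfy0] with x hx
    intro hcon; rw [hcon, hroot] at hx; exact hx rfl
  have ty' : Tendsto y l (𝓝[≠] α) := by
    rw [tendsto_nhdsWithin_iff]
    exact ⟨ty, hyne.mono fun x hx => by simpa using hx⟩
  have tid' : Tendsto (fun x : ℝ => x) l (𝓝[≠] α) := by
    rw [tendsto_nhdsWithin_iff]
    exact ⟨tid, hne.mono fun x hx => by simpa using hx⟩
  have hslope : Tendsto (fun u => f u / (u - α)) (𝓝[≠] α) (𝓝 A) := by
    have h1 : HasDerivAt f A α := hAα ▸ hfd.self_of_nhds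
    have h2 := hasDerivAt_iff_tendsto_slope.mp h1
    refine h2.congr fun u => ?_
    rw [slope_def_field, hroot, sub_zero]
  have hfx_ratio : (fun x => (x - α) / f x) =O[l] fun _ => (1:ℝ) := by
    have h1 : Tendsto (fun x => f x / (x - α)) l (𝓝 A) := hslope.comp tid'
    exact ((h1.inv₀ hA).congr fun x => inv_div _ _).isBigO_one ℝ
  have hfy_ratio : (fun x => (y x - α) / f (y x)) =O[l] fun _ => (1:ℝ) := by
    have h1 : Tendsto (fun x => f (y x) / (y x - α)) l (𝓝 A) := hslope.comp ty'
    exact ((h1.inv₀ hA).congr fun x => inv_div _ _).isBigO_one ℝ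
  have hvb : (fun x => (d x)⁻¹) =O[l] fun _ => (1:ℝ) := (td.inv₀ hA).isBigO_one ℝ
  have R : ∀ {u w : ℝ → ℝ}, u =O[𝓝 α] w → u =O[l] w := fun h => h.mono hl_le
  have hEle : ∀ {j k : ℕ}, j ≤ k →
      ((fun x => (x - α) ^ k) =O[l] fun x => (x - α) ^ j) :=
    fun h => isBigO_pow_pow_aux' tE h
  have hcA : c * A = B / 2 := by
    rw [hc_def]; field_simp
  -- Newton step error expansion : y x - α = c (x-α)^2 + O((x-α)^3)
  have hMid : (fun x => (x - α) * d x - f x - c * (x - α) ^ 2 * d x) =O[l]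
      fun x => (x - α) ^ 3 := by
    have hident : ∀ x, (x - α) * d x - f x - c * (x - α) ^ 2 * d x =
        (x - α) * (d x - A - B * (x - α)) - (f x - A * (x - α) - B / 2 * (x - α) ^ 2)
          - c * B * (x - α) ^ 3 - c * (x - α) ^ 2 * (d x - A - B * (x - α)) := by
      intro x; linear_combination (-(x - α) ^ 2) * hcA
    have T1 : (fun x => (x - α) * (d x - A - B * (x - α))) =O[l] fun x => (x - α) ^ 3 := by
      have := (isBigO_refl (fun x : ℝ => x - α) l).mul (R h2)
      exact this.trans (((isBigO_refl _ l).congr_left fun x => by ring) :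
        (fun x : ℝ => (x - α) * (x - α) ^ 2) =O[l] fun x => (x - α) ^ 3)
    have T2 := R h3
    have T3 : (fun x : ℝ => c * B * (x - α) ^ 3) =O[l] fun x => (x - α) ^ 3 :=
      (isBigO_refl _ l).const_mul_left _
    have T4 : (fun x => c * (x - α) ^ 2 * (d x - A - B * (x - α))) =O[l]
        fun x => (x - α) ^ 3 := by
      have h5 := ((isBigO_refl (fun x : ℝ => (x - α) ^ 2) l).const_mul_left c).mul (R h2)
      refine (h5.congr_left fun x => by ring).trans ?_
      exact (@hEle 3 4 (by norm_num)).congr_left fun x => by ring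
    exact (((T1.sub T2).sub T3).sub T4).congr_left fun x => (hident x).symm
  have h_ey : (fun x => y x - α - c * (x - α) ^ 2) =O[l] fun x => (x - α) ^ 3 := by
    refine (hMid.mul hvb).congr' ?_ (by filter_upwards with x using by simp)
    filter_upwards [hd0] with x hx
    rw [hy x]
    field_simp [hA]
    ring
  have hey2 : (fun x => y x - α) =O[l] fun x => (x - α) ^ 2 := by
    have h5 := (h_ey.trans (@hEle 2 3 (by norm_num))).add
      ((isBigO_refl (fun x : ℝ => (x - α) ^ 2) l).const_mul_left c)
    exact h5.congr_left fun x => by ring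
  -- t₁ = f(y)/f(x) = c(x-α) + O((x-α)^2)
  have hyy2 : (fun x => (y x - α) ^ 2) =O[l] fun x => (x - α) ^ 3 := by
    have h5 := hey2.mul hey2
    refine (h5.congr_left fun x => by ring).trans ?_
    exact (@hEle 3 4 (by norm_num)).congr_left fun x => by ring
  have hq4y : (fun x => f (y x) - A * (y x - α)) =O[l] fun x => (y x - α) ^ 2 :=
    h4.comp_tendsto ty
  have hP : (fun x => f (y x) - c * (x - α) * f x) =O[l] fun x => (x - α) ^ 3 := by
    have hident : ∀ x, f (y x) - c * (x - α) * f x =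
        (f (y x) - A * (y x - α)) + A * (y x - α - c * (x - α) ^ 2)
          - c * (x - α) * (f x - A * (x - α) - B / 2 * (x - α) ^ 2)
          - (c * B / 2) * (x - α) ^ 3 := by
      intro x; ring
    have T1 := hq4y.trans hyy2
    have T2 := h_ey.const_mul_left A
    have T3 : (fun x => c * (x - α) * (f x - A * (x - α) - B / 2 * (x - α) ^ 2)) =O[l]
        fun x => (x - α) ^ 3 := by
      have h5 := ((isBigO_refl (fun x : ℝ => x - α) l).const_mul_left c).mul (R h3)
      refine h5.trans ?_
      exact (@hEle 3 4 (by norm_num)).congr_left fun x => by ring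
    have T4 : (fun x : ℝ => c * B / 2 * (x - α) ^ 3) =O[l] fun x => (x - α) ^ 3 :=
      (isBigO_refl _ l).const_mul_left _
    exact (((T1.add T2).sub T3).sub T4).congr_left fun x => (hident x).symm
  have ht1 : (fun x => f (y x) / f x - c * (x - α)) =O[l] fun x => (x - α) ^ 2 := by
    have hdiv : (fun x => (f (y x) - c * (x - α) * f x) / (x - α)) =O[l]
        fun x => (x - α) ^ 2 := by
      refine isBigO_div_aux' (hP.congr_right fun x => by ring) ?_
      filter_upwards [hne] with x hx
      exact sub_ne_zero.mpr hx
    refine (hdiv.mul hfx_ratio).congr' ?_ (by filter_upwards with x using by simp)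
    filter_upwards [hne, hfx0] with x hx1 hx2
    have hx1' : x - α ≠ 0 := sub_ne_zero.mpr hx1
    field_simp
  have ht1e : (fun x => f (y x) / f x) =O[l] fun x => (x - α) ^ 1 := by
    have hterm : (fun x : ℝ => c * (x - α) ^ 1) =O[l] fun x => (x - α) ^ 1 :=
      (isBigO_refl _ l).const_mul_left c
    have h5 := (ht1.trans (@hEle 1 2 (by norm_num))).add hterm
    exact h5.congr_left fun x => by ring
  have tE1 : Tendsto (fun x : ℝ => (x - α) ^ 1) l (𝓝 0) := by simpa using tE.pow 1
  have tE2 : Tendsto (fun x : ℝ => (x - α) ^ 2) l (𝓝 0) := by simpa using tE.pow 2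
  have tt1 : Tendsto (fun x => f (y x) / f x) l (𝓝 0) := ht1e.trans_tendsto tE1
  have ht1sq : (fun x => (f (y x) / f x) ^ 2) =O[l] fun x => (x - α) ^ 2 := by
    have h5 := ht1e.mul ht1e
    exact (h5.congr_left fun x => by ring).congr_right fun x => by ring
  have hGg : (fun x => G (f (y x) / f x) - 1 - 2 * c * (x - α)) =O[l]
      fun x => (x - α) ^ 2 := by
    have T1 : (fun x => G (f (y x) / f x) - 1 - 2 * (f (y x) / f x)) =O[l]
        fun x => (x - α) ^ 2 := (hGe.comp_tendsto tt1).trans ht1sq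
    have T2 := ht1.const_mul_left 2
    exact (T1.add T2).congr_left fun x => by ring
  -- expansion of 1/(d x)
  have hv : (fun x => (d x)⁻¹ - A⁻¹ + 2 * c * A⁻¹ * (x - α)) =O[l]
      fun x => (x - α) ^ 2 := by
    have hRR : (fun x => A ^ 2 - A * d x + B * (x - α) * d x) =O[l]
        fun x => (x - α) ^ 2 := by
      have hident : ∀ x, A ^ 2 - A * d x + B * (x - α) * d x =
          -(A * (d x - A - B * (x - α))) + B * (x - α) * (d x - A) := by
        intro x; ring
      have T1 := (R h2).const_mul_left A
      have T2 : (fun x => B * (x - α) * (d x - A)) =O[l] fun x => (x - α) ^ 2 := by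
        have h5 := ((isBigO_refl (fun x : ℝ => x - α) l).const_mul_left B).mul (R hd1)
        exact (h5.congr_left fun x => by ring).congr_right fun x => by ring
      exact (T1.neg_left.add T2).congr_left fun x => (hident x).symm
    have hmul : (fun x : ℝ => A⁻¹ * A⁻¹ * (d x)⁻¹) =O[l] fun _ => (1:ℝ) := by
      exact (Filter.Tendsto.isBigO_one ℝ ((td.inv₀ hA).const_mul (A⁻¹ * A⁻¹)))
    refine (hRR.mul hmul).congr' ?_ (by filter_upwards with x using by simp)
    filter_upwards [hd0] with x hx
    rw [hc_def]
    field_simp [hA]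
  -- first application of the key step : z - α = O((y-α)(x-α)^2)
  have hq_y : (fun x => f (y x) - A * (y x - α)) =O[l]
      fun x => (y x - α) * (x - α) ^ 2 := by
    refine hq4y.trans ?_
    have h5 := (isBigO_refl (fun x => y x - α) l).mul hey2
    exact (h5.congr_left fun x => by ring)
  have hzO := key_step' hA hv hvb tE hq_y hGg
  have hez : (fun x => z x - α) =O[l] fun x => (y x - α) * (x - α) ^ 2 := by
    refine hzO.congr' ?_ EventuallyEq.rfl
    filter_upwards with x
    rw [hz x, div_eq_mul_inv]
    ring
  have hez4 : (fun x => z x - α) =O[l] fun x => (x - α) ^ 4 := by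
    refine hez.trans ?_
    have h5 := hey2.mul (isBigO_refl (fun x : ℝ => (x - α) ^ 2) l)
    exact h5.congr_right fun x => by ring
  -- z-side estimates
  have tz : Tendsto z l (𝓝 α) := by
    have h1 : Tendsto (fun x => z x - α) l (𝓝 0) := hez4.trans_tendsto (by simpa using tE.pow 4)
    have h2 := h1.add_const α
    simp only [zero_add] at h2
    exact h2.congr fun x => by ring
  have hq4z : (fun x => f (z x) - A * (z x - α)) =O[l] fun x => (z x - α) ^ 2 :=
    h4.comp_tendsto tz
  have hq_z : (fun x => f (z x) - A * (z x - α)) =O[l]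
      fun x => (z x - α) * (x - α) ^ 2 := by
    refine hq4z.trans ?_
    have h5 := (isBigO_refl (fun x => z x - α) l).mul (hez4.trans (@hEle 2 4 (by norm_num)))
    exact h5.congr_left fun x => by ring
  have hfzO : (fun x => f (z x)) =O[l] fun x => (y x - α) * (x - α) ^ 2 := by
    have T1 : (fun x => f (z x) - A * (z x - α)) =O[l]
        fun x => (y x - α) * (x - α) ^ 2 := by
      refine hq_z.trans ?_
      have h5 := hez.mul ((isBigO_refl (fun x : ℝ => (x - α) ^ 2) l).trans
        ((tE2.isBigO_one ℝ)))
      exact (h5.congr_left fun x => by ring).congr_right fun x => by ring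
    have T2 := hez.const_mul_left A
    exact (T1.add T2).congr_left fun x => by ring
  have hfz4 : (fun x => f (z x)) =O[l] fun x => (x - α) ^ 4 := by
    refine hfzO.trans ?_
    have h5 := hey2.mul (isBigO_refl (fun x : ℝ => (x - α) ^ 2) l)
    exact h5.congr_right fun x => by ring
  have ht3 : (fun x => f (z x) / f (y x)) =O[l] fun x => (x - α) ^ 2 := by
    have hdiv : (fun x => f (z x) / (y x - α)) =O[l] fun x => (x - α) ^ 2 := by
      refine isBigO_div_aux' hfzO ?_
      filter_upwards [hyne] with x hx
      exact sub_ne_zero.mpr hx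
    refine (hdiv.mul hfy_ratio).congr' ?_ (by filter_upwards with x using by simp)
    filter_upwards [hyne, hfy0] with x hx1 hx2
    have hx1' : y x - α ≠ 0 := sub_ne_zero.mpr hx1
    field_simp
  have ht2 : (fun x => f (z x) / f x) =O[l] fun x => (x - α) ^ 2 := by
    have hdiv : (fun x => f (z x) / (x - α)) =O[l] fun x => (x - α) ^ 3 := by
      refine isBigO_div_aux' (hfz4.congr_right fun x => by ring) ?_
      filter_upwards [hne] with x hx
      exact sub_ne_zero.mpr hx
    have h5 : (fun x => f (z x) / f x) =O[l] fun x => (x - α) ^ 3 := by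
      refine (hdiv.mul hfx_ratio).congr' ?_ (by filter_upwards with x using by simp)
      filter_upwards [hne, hfx0] with x hx1 hx2
      have hx1' : x - α ≠ 0 := sub_ne_zero.mpr hx1
      field_simp
    exact h5.trans (@hEle 2 3 (by norm_num))
  have tt2 : Tendsto (fun x => f (z x) / f x) l (𝓝 0) := ht2.trans_tendsto tE2
  have tt3 : Tendsto (fun x => f (z x) / f (y x)) l (𝓝 0) := ht3.trans_tendsto tE2
  -- the H-value expansion via local Lipschitz continuity
  have hHg : (fun x =>
      H (f (y x) / f x) (f (z x) / f x) (f (z x) / f (y x)) - 1 - 2 * c * (x - α))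
      =O[l] fun x => (x - α) ^ 2 := by
    obtain ⟨K, t, htmem, hlip⟩ :=
      (hH.contDiffAt (x := ((0:ℝ), (0:ℝ), (0:ℝ)))).of_le (by simp) |>.exists_lipschitzOnWith
    have tp : Tendsto (fun x => ((f (y x) / f x, f (z x) / f x, f (z x) / f (y x)) : ℝ × ℝ × ℝ))
        l (𝓝 (0, 0, 0)) := tt1.prodMk_nhds (tt2.prodMk_nhds tt3)
    have tq : Tendsto (fun x => ((f (y x) / f x, (0:ℝ), (0:ℝ)) : ℝ × ℝ × ℝ))
        l (𝓝 (0, 0, 0)) := tt1.prodMk_nhds (tendsto_const_nhds.prodMk_nhds tendsto_const_nhds)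
    have evp : ∀ᶠ x in l, ((f (y x) / f x, f (z x) / f x, f (z x) / f (y x)) : ℝ × ℝ × ℝ) ∈ t :=
      tp htmem
    have evq : ∀ᶠ x in l, ((f (y x) / f x, (0:ℝ), (0:ℝ)) : ℝ × ℝ × ℝ) ∈ t :=
      tq htmem
    have hmidO : (fun x =>
        H (f (y x) / f x) (f (z x) / f x) (f (z x) / f (y x)) - H (f (y x) / f x) 0 0)
        =O[l] fun x => ‖f (z x) / f x‖ + ‖f (z x) / f (y x)‖ := by
      rw [isBigO_iff]
      refine ⟨(K : ℝ), ?_⟩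
      filter_upwards [evp, evq] with x hp hq
      have hdd' := lipschitzOnWith_iff_dist_le_mul.mp hlip _ hp _ hq
      have hdist : dist ((f (y x) / f x, f (z x) / f x, f (z x) / f (y x)) : ℝ × ℝ × ℝ)
          ((f (y x) / f x, (0:ℝ), (0:ℝ)) : ℝ × ℝ × ℝ)
          ≤ |f (z x) / f x| + |f (z x) / f (y x)| := by
        rw [Prod.dist_eq]
        refine max_le ?_ ?_
        · simp only [dist_self]
          positivity
        · rw [Prod.dist_eq]
          refine max_le ?_ ?_
          · rw [Real.dist_eq, sub_zero]
            exact le_add_of_nonneg_right (abs_nonneg _)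
          · rw [Real.dist_eq, sub_zero]
            exact le_add_of_nonneg_left (abs_nonneg _)
      have hnn : (0:ℝ) ≤ |f (z x) / f x| + |f (z x) / f (y x)| :=
        add_nonneg (abs_nonneg _) (abs_nonneg _)
      calc ‖H (f (y x) / f x) (f (z x) / f x) (f (z x) / f (y x)) - H (f (y x) / f x) 0 0‖
          = dist (H (f (y x) / f x) (f (z x) / f x) (f (z x) / f (y x)))
              (H (f (y x) / f x) 0 0) := by rw [Real.norm_eq_abs, Real.dist_eq]
        _ ≤ (K : ℝ) * dist ((f (y x) / f x, f (z x) / f x, f (z x) / f (y x)) : ℝ × ℝ × ℝ)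
              ((f (y x) / f x, (0:ℝ), (0:ℝ)) : ℝ × ℝ × ℝ) := hdd'
        _ ≤ (K : ℝ) * (|f (z x) / f x| + |f (z x) / f (y x)|) :=
            mul_le_mul_of_nonneg_left hdist K.coe_nonneg
        _ = (K : ℝ) * ‖‖f (z x) / f x‖ + ‖f (z x) / f (y x)‖‖ := by
            rw [Real.norm_eq_abs, Real.norm_eq_abs, Real.norm_eq_abs,
              abs_of_nonneg hnn]
    have hsum : (fun x => ‖f (z x) / f x‖ + ‖f (z x) / f (y x)‖) =O[l]
        fun x => (x - α) ^ 2 := ht2.norm_left.add ht3.norm_left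
    have T1 := hmidO.trans hsum
    have T2 : (fun x => H (f (y x) / f x) 0 0 - 1 - 2 * (f (y x) / f x)) =O[l]
        fun x => (x - α) ^ 2 := (hHe.comp_tendsto tt1).trans ht1sq
    have T3 := ht1.const_mul_left 2
    exact ((T1.add T2).add T3).congr_left fun x => by ring
  -- second application of the key step and conclusion
  have hfinal : (fun x => Φ x - α) =O[l] fun x => (x - α) ^ 6 := by
    have hkey := key_step' hA hv hvb tE hq_z hHg
    have hΦO : (fun x => Φ x - α) =O[l] fun x => (z x - α) * (x - α) ^ 2 := by
      refine hkey.congr' ?_ EventuallyEq.rfl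
      filter_upwards with x
      rw [hΦ x, div_eq_mul_inv]
      ring
    refine hΦO.trans ?_
    have h5 := hez4.mul (isBigO_refl (fun x : ℝ => (x - α) ^ 2) l)
    exact h5.congr_right fun x => by ring
  -- extract the neighborhood and constant
  rcases isBigO_iff.mp hfinal with ⟨C, hC⟩
  rw [hl_def, eventually_inf_principal, eventually_nhdsWithin_iff] at hC
  rcases Metric.eventually_nhds_iff.mp hC with ⟨δ, hδ, hball⟩
  refine ⟨δ, hδ, max C 1, lt_of_lt_of_le one_pos (le_max_right _ _),
    fun x hx1 hx2 hfx hfy => ?_⟩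
  have hxα : x ≠ α := by
    intro h; rw [h] at hx1; simp at hx1
  have hb := hball (by rwa [Real.dist_eq] : dist x α < δ)
    (by simpa using hxα) (by exact ⟨hfx, hfy⟩)
  rw [Real.norm_eq_abs, norm_pow, Real.norm_eq_abs] at hb
  calc |Φ x - α| ≤ C * |x - α| ^ 6 := hb
    _ ≤ max C 1 * |x - α| ^ 6 :=
        mul_le_mul_of_nonneg_right (le_max_left _ _) (pow_nonneg (abs_nonneg _) 6)
end

section
/- Let f : ℝ → ℝ be C^∞ on an open set containing α, with f(α) = 0 and f'(α) ≠ 0. Let G : ℝ → ℝ and H : ℝ × ℝ × ℝ → ℝ be C^∞ functions satisfying G(0) = 1, G'(0) = 2, H(0,0,0) = 1, ∂H/∂t₁(0,0,0) = 2, and additionally ∂²H/∂t₁²(0,0,0) = G''(0) + 2 and ∂H/∂t₃(0,0,0) = 1. For x near α define y(x) = x − f(x)/f'(x), z(x) = y(x) − G(f(y(x))/f(x))·f(y(x))/f'(x), and Φ(x) = z(x) − H(f(y(x))/f(x), f(z(x))/f(x), f(z(x))/f(y(x)))·f(z(x))/f'(x). Then there exist δ > 0 and C > 0 such that for every x with 0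 < |x − α| < δ at which f(x) ≠ 0 and f(y(x)) ≠ 0, one has |Φ(x) − α| ≤ C·|x − α|^7 (local convergence order at least seven). -/
open Topology Filter Asymptotics Set

/-- If `r α = 0`, `r` is `C^∞` on an open set containing `α`, and
`deriv r = O((x-α)^n)` near `α`, then `r = O((x-α)^(n+1))` near `α`. -/
lemma mvt_step {α : ℝ} {r : ℝ → ℝ} {V : Set ℝ} (hV : IsOpen V) (hα : α ∈ V)
    (hr : ContDiffOn ℝ (⊤ : ℕ∞) r V) (h0 : r α = 0) {n : ℕ}
    (hd : (deriv r) =O[𝓝 α] fun x => (x - α) ^ n) :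
    r =O[𝓝 α] fun x => (x - α) ^ (n + 1) := by
  obtain ⟨C₀, hC₀⟩ := hd.bound
  set C := max C₀ 0 with hCdef
  have hCnn : 0 ≤ C := le_max_right _ _
  have hC : ∀ᶠ x in 𝓝 α, ‖deriv r x‖ ≤ C * ‖(x - α) ^ n‖ := by
    filter_upwards [hC₀] with x hx
    exact hx.trans (mul_le_mul_of_nonneg_right (le_max_left _ _) (norm_nonneg _))
  obtain ⟨ε, hε, hball⟩ := Metric.eventually_nhds_iff.1 (hC.and (hV.eventually_mem hα))
  have hdiff : DifferentiableOn ℝ r V := hr.differentiableOn (by simp)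
  refine IsBigO.of_bound C ?_
  rw [Metric.eventually_nhds_iff]
  refine ⟨ε, hε, fun x hx => ?_⟩
  have hsub : ∀ t : ℝ, |t - α| ≤ |x - α| → t ∈ V ∧ ‖deriv r t‖ ≤ C * ‖(t - α) ^ n‖ := by
    intro t ht
    have : dist t α < ε := lt_of_le_of_lt (by simpa [Real.dist_eq] using ht)
      (by simpa [Real.dist_eq] using hx)
    exact ⟨(hball this).2, (hball this).1⟩
  have key : ∀ c : ℝ, |c - α| ≤ |x - α| → r x = deriv r c * (x - α) →
      ‖r x‖ ≤ C * ‖(x - α) ^ (n + 1)‖ := by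
    intro c hcb hrx
    have hb := (hsub c hcb).2
    rw [hrx]
    simp only [norm_mul, Real.norm_eq_abs, abs_pow] at hb ⊢
    calc |deriv r c| * |x - α| ≤ (C * |c - α| ^ n) * |x - α| :=
          mul_le_mul_of_nonneg_right hb (abs_nonneg _)
      _ ≤ (C * |x - α| ^ n) * |x - α| := by
          refine mul_le_mul_of_nonneg_right
            (mul_le_mul_of_nonneg_left (pow_le_pow_left₀ (abs_nonneg _) hcb n) hCnn)
            (abs_nonneg _)
      _ = C * (|x - α| ^ n * |x - α|) := by ring
      _ = C * |x - α| ^ (n + 1) := by rw [pow_succ]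
  rcases lt_trichotomy x α with h | h | h
  · have hco : ContinuousOn r (Icc x α) := by
      refine (hdiff.continuousOn).mono fun t ht => (hsub t ?_).1
      rw [abs_sub_le_iff]; constructor <;> simp [abs_of_neg (sub_neg.2 h)] <;>
        linarith [ht.1, ht.2]
    have hdo : DifferentiableOn ℝ r (Ioo x α) := by
      refine hdiff.mono fun t ht => (hsub t ?_).1
      rw [abs_sub_le_iff]
      constructor <;> simp [abs_of_neg (sub_neg.2 h)] <;> linarith [ht.1.le, ht.2.le]
    obtain ⟨c, hc, hceq⟩ := exists_deriv_eq_slope r h hco hdo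
    refine key c ?_ ?_
    · rw [abs_of_neg (sub_neg.2 hc.2), abs_of_neg (sub_neg.2 h)]; linarith [hc.1]
    · rw [hceq, h0]; field_simp [sub_ne_zero.2 h.ne']; ring
  · subst h; simp [h0]
  · have hco : ContinuousOn r (Icc α x) := by
      refine (hdiff.continuousOn).mono fun t ht => (hsub t ?_).1
      rw [abs_sub_le_iff]; constructor <;> simp [abs_of_pos (sub_pos.2 h)] <;>
        linarith [ht.1, ht.2]
    have hdo : DifferentiableOn ℝ r (Ioo α x) := by
      refine hdiff.mono fun t ht => (hsub t ?_).1
      rw [abs_sub_le_iff]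
      constructor <;> simp [abs_of_pos (sub_pos.2 h)] <;> linarith [ht.1.le, ht.2.le]
    obtain ⟨c, hc, hceq⟩ := exists_deriv_eq_slope r h hco hdo
    refine key c ?_ ?_
    · rw [abs_of_pos (sub_pos.2 hc.1), abs_of_pos (sub_pos.2 h)]; linarith [hc.2]
    · rw [hceq, h0]; field_simp [sub_ne_zero.2 h.ne']; ring

section util
variable {α : ℝ} {l : Filter ℝ}

lemma tendsto_isBigO_one {F : ℝ → ℝ} {c : ℝ} (h : Tendsto F l (𝓝 c)) :
    F =O[l] (fun _ => (1 : ℝ)) :=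
  (isBigO_one_iff ℝ).2 h.norm.isBoundedUnder_le

lemma pow_isBigO_pow {i j : ℕ} (hij : j ≤ i) (hl : l ≤ 𝓝 α) :
    (fun x => (x - α) ^ i) =O[l] fun x => (x - α) ^ j := by
  refine IsBigO.of_bound 1 ?_
  have h1 : ∀ᶠ x in 𝓝 α, |x - α| ≤ 1 := by
    have : Tendsto (fun x => |x - α|) (𝓝 α) (𝓝 |α - α|) :=
      ((continuous_id.sub continuous_const).abs).continuousAt
    simp only [sub_self, abs_zero] at this
    exact this.eventually_le_const (by norm_num)
  filter_upwards [hl h1] with x hx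
  simp only [Real.norm_eq_abs, abs_pow, one_mul]
  exact pow_le_pow_of_le_one (abs_nonneg _) hx hij

lemma isBigO_div_sub {F : ℝ → ℝ} {n : ℕ} (hne : ∀ᶠ x in l, x ≠ α)
    (h : F =O[l] fun x => (x - α) ^ (n + 1)) :
    (fun x => F x / (x - α)) =O[l] fun x => (x - α) ^ n := by
  obtain ⟨C, hC⟩ := h.bound
  refine IsBigO.of_bound C ?_
  filter_upwards [hC, hne] with x hx hxa
  have hxa' : x - α ≠ 0 := sub_ne_zero.2 hxa
  simp only [Real.norm_eq_abs, abs_pow] at hx ⊢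
  rw [abs_div]
  rw [div_le_iff₀ (abs_pos.2 hxa')]
  calc |F x| ≤ C * |x - α| ^ (n + 1) := hx
    _ = C * |x - α| ^ n * |x - α| := by ring
  
lemma inv_sub_isBigO {v Q u : ℝ → ℝ} (hv0 : ∀ᶠ x in l, v x ≠ 0)
    (hvb : (fun x => (v x)⁻¹) =O[l] (fun _ => (1:ℝ)))
    (h : (fun x => 1 - v x * Q x) =O[l] u) :
    (fun x => (v x)⁻¹ - Q x) =O[l] u := by
  have heq : (fun x => (1 - v x * Q x) * (v x)⁻¹) =ᶠ[l] fun x => (v x)⁻¹ - Q x := by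
    filter_upwards [hv0] with x hx
    field_simp
  have h2 : (fun x => (1 - v x * Q x) * (v x)⁻¹) =O[l] u := by
    simpa using h.mul hvb
  exact h2.congr' heq EventuallyEq.rfl

end util

/-- Fourth-order Taylor expansion with big-O remainder, for C^∞ functions on an open set. -/
lemma taylor4 {α : ℝ} {g : ℝ → ℝ} {V : Set ℝ} (hV : IsOpen V) (hα : α ∈ V)
    (hg : ContDiffOn ℝ (⊤ : ℕ∞) g V) :
    (fun x => g x - g α - deriv g α * (x - α) - deriv (deriv g) α / 2 * (x - α) ^ 2
      - deriv (deriv (deriv g)) α / 6 * (x - α) ^ 3) =O[𝓝 α] fun x => (x - α) ^ 4 := by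
  have htop : ((⊤ : ℕ∞) : WithTop ℕ∞) + 1 ≤ ((⊤ : ℕ∞) : WithTop ℕ∞) := by
    exact_mod_cast (le_top : (⊤ : ℕ∞) + 1 ≤ ⊤)
  have hg1 : ContDiffOn ℝ (⊤ : ℕ∞) (deriv g) V := hg.deriv_of_isOpen hV htop
  have hg2 : ContDiffOn ℝ (⊤ : ℕ∞) (deriv (deriv g)) V := hg1.deriv_of_isOpen hV htop
  have hg3 : ContDiffOn ℝ (⊤ : ℕ∞) (deriv (deriv (deriv g))) V := hg2.deriv_of_isOpen hV htop
  have hg4 : ContDiffOn ℝ (⊤ : ℕ∞) (deriv (deriv (deriv (deriv g)))) V := hg3.deriv_of_isOpen hV htop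
  have hVmem : ∀ᶠ x in 𝓝 α, x ∈ V := hV.eventually_mem hα
  have hdiffat : ∀ (h : ℝ → ℝ), ContDiffOn ℝ (⊤ : ℕ∞) h V → ∀ (x : ℝ), x ∈ V →
      DifferentiableAt ℝ h x := fun h hh x hx =>
    ((hh.differentiableOn (by simp)).differentiableAt (hV.mem_nhds hx))
  -- step 3
  have q3 : (fun x => deriv (deriv (deriv g)) x - deriv (deriv (deriv g)) α)
      =O[𝓝 α] fun x => (x - α) ^ 1 := by
    refine mvt_step hV hα (hg3.sub contDiffOn_const) (by simp) ?_
    have hcont : Tendsto (deriv (deriv (deriv (deriv g)))) (𝓝 α)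
        (𝓝 (deriv (deriv (deriv (deriv g))) α)) :=
      ((hg4.continuousOn.continuousAt (hV.mem_nhds hα)))
    have hb : (deriv (deriv (deriv (deriv g)))) =O[𝓝 α] (fun _ => (1:ℝ)) :=
      tendsto_isBigO_one hcont
    have heq : (fun x => deriv (deriv (deriv (deriv g))) x) =ᶠ[𝓝 α]
        deriv (fun x => deriv (deriv (deriv g)) x - deriv (deriv (deriv g)) α) := by
      filter_upwards [hVmem] with x hx
      rw [deriv_sub_const]
    refine ((hb.congr' heq EventuallyEq.rfl).trans ?_)
    refine IsBigO.of_bound 1 (Eventually.of_forall fun x => by simp)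
  -- step 2
  have q2 : (fun x => deriv (deriv g) x - deriv (deriv g) α
      - deriv (deriv (deriv g)) α * (x - α)) =O[𝓝 α] fun x => (x - α) ^ 2 := by
    have hp : ContDiff ℝ (⊤ : ℕ∞) (fun t : ℝ => deriv (deriv g) α
        + deriv (deriv (deriv g)) α * (t - α)) := by fun_prop
    have hcd : ContDiffOn ℝ (⊤ : ℕ∞) (fun t => deriv (deriv g) t - (deriv (deriv g) α
        + deriv (deriv (deriv g)) α * (t - α))) V := hg2.sub hp.contDiffOn
    have := mvt_step (n := 1) hV hα hcd (by simp) ?_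
    · exact this.congr_left fun x => by ring
    · have heq : (fun x => deriv (deriv (deriv g)) x - deriv (deriv (deriv g)) α) =ᶠ[𝓝 α]
          deriv (fun t => deriv (deriv g) t - (deriv (deriv g) α
            + deriv (deriv (deriv g)) α * (t - α))) := by
        filter_upwards [hVmem] with x hx
        have hder : HasDerivAt (fun t => deriv (deriv g) t - (deriv (deriv g) α
            + deriv (deriv (deriv g)) α * (t - α)))
            (deriv (deriv (deriv g)) x - deriv (deriv (deriv g)) α * 1) x := by
          refine HasDerivAt.sub ?_ ?_
          · exact (hdiffat _ hg2 _ hx).hasDerivAt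
          · exact (((hasDerivAt_id x).sub_const α).const_mul _).const_add _
        rw [hder.deriv]; ring
      exact (q3.congr' heq EventuallyEq.rfl).congr_right fun x => by ring
  -- step 1
  have q1 : (fun x => deriv g x - deriv g α - deriv (deriv g) α * (x - α)
      - deriv (deriv (deriv g)) α / 2 * (x - α) ^ 2) =O[𝓝 α] fun x => (x - α) ^ 3 := by
    have hp : ContDiff ℝ (⊤ : ℕ∞) (fun t : ℝ => deriv g α + deriv (deriv g) α * (t - α)
        + deriv (deriv (deriv g)) α / 2 * (t - α) ^ 2) := by fun_prop
    have hcd : ContDiffOn ℝ (⊤ : ℕ∞) (fun t => deriv g t - (deriv g α + deriv (deriv g) α * (t - α)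
        + deriv (deriv (deriv g)) α / 2 * (t - α) ^ 2)) V := hg1.sub hp.contDiffOn
    have := mvt_step (n := 2) hV hα hcd (by simp) ?_
    · exact this.congr_left fun x => by ring
    · have heq : (fun x => deriv (deriv g) x - deriv (deriv g) α
          - deriv (deriv (deriv g)) α * (x - α)) =ᶠ[𝓝 α]
          deriv (fun t => deriv g t - (deriv g α + deriv (deriv g) α * (t - α)
            + deriv (deriv (deriv g)) α / 2 * (t - α) ^ 2)) := by
        filter_upwards [hVmem] with x hx
        have hder : HasDerivAt (fun t => deriv g t - (deriv g α
            + deriv (deriv g) α * (t - α) + deriv (deriv (deriv g)) α / 2 * (t - α) ^ 2))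
            (deriv (deriv g) x - (deriv (deriv g) α * 1
              + deriv (deriv (deriv g)) α / 2 * (↑2 * (x - α) ^ 1 * 1))) x := by
          refine HasDerivAt.sub ?_ ?_
          · exact (hdiffat _ hg1 _ hx).hasDerivAt
          · exact ((((hasDerivAt_id x).sub_const α).const_mul _).const_add _).add
              ((((hasDerivAt_id x).sub_const α).pow 2).const_mul _)
        rw [hder.deriv]; push_cast; ring
      exact (q2.congr' heq EventuallyEq.rfl).congr_right fun x => by ring
  -- step 0
  have hp : ContDiff ℝ (⊤ : ℕ∞) (fun t : ℝ => g α + deriv g α * (t - α)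
      + deriv (deriv g) α / 2 * (t - α) ^ 2
      + deriv (deriv (deriv g)) α / 6 * (t - α) ^ 3) := by fun_prop
  have hcd : ContDiffOn ℝ (⊤ : ℕ∞) (fun t => g t - (g α + deriv g α * (t - α)
      + deriv (deriv g) α / 2 * (t - α) ^ 2
      + deriv (deriv (deriv g)) α / 6 * (t - α) ^ 3)) V := hg.sub hp.contDiffOn
  have := mvt_step (n := 3) hV hα hcd (by simp) ?_
  · exact this.congr_left fun x => by ring
  · have heq : (fun x => deriv g x - deriv g α - deriv (deriv g) α * (x - α)
        - deriv (deriv (deriv g)) α / 2 * (x - α) ^ 2) =ᶠ[𝓝 α]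
        deriv (fun t => g t - (g α + deriv g α * (t - α)
          + deriv (deriv g) α / 2 * (t - α) ^ 2
          + deriv (deriv (deriv g)) α / 6 * (t - α) ^ 3)) := by
      filter_upwards [hVmem] with x hx
      have hder : HasDerivAt (fun t => g t - (g α + deriv g α * (t - α)
          + deriv (deriv g) α / 2 * (t - α) ^ 2
          + deriv (deriv (deriv g)) α / 6 * (t - α) ^ 3))
          (deriv g x - (deriv g α * 1 + deriv (deriv g) α / 2 * (↑2 * (x - α) ^ 1 * 1)
            + deriv (deriv (deriv g)) α / 6 * (↑3 * (x - α) ^ 2 * 1))) x := by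
        refine HasDerivAt.sub ?_ ?_
        · exact (hdiffat _ hg _ hx).hasDerivAt
        · exact (((((hasDerivAt_id x).sub_const α).const_mul _).const_add _).add
            ((((hasDerivAt_id x).sub_const α).pow 2).const_mul _)).add
            ((((hasDerivAt_id x).sub_const α).pow 3).const_mul _)
      rw [hder.deriv]; push_cast; ring
    exact (q1.congr' heq EventuallyEq.rfl).congr_right fun x => by ring

set_option maxHeartbeats 1000000 in
lemma H_decomp {H : ℝ → ℝ → ℝ → ℝ}
    (hH : ContDiff ℝ (⊤ : ℕ∞) (fun p : ℝ × ℝ × ℝ => H p.1 p.2.1 p.2.2))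
    (hH3 : deriv (fun s => H 0 0 s) 0 = 1)
    {l : Filter ℝ} {α : ℝ} (hl : l ≤ 𝓝 α) {t₁ t₂ t₃ : ℝ → ℝ}
    (h1 : t₁ =O[l] fun x => (x - α) ^ 1)
    (h2 : t₂ =O[l] fun x => (x - α) ^ 3)
    (h3 : t₃ =O[l] fun x => (x - α) ^ 2) :
    (fun x => H (t₁ x) (t₂ x) (t₃ x) - H (t₁ x) 0 0 - t₃ x) =O[l] fun x => (x - α) ^ 3 := by
  set Hu : ℝ × ℝ × ℝ → ℝ := fun p => H p.1 p.2.1 p.2.2 with hHu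
  have hHdiff : Differentiable ℝ Hu := hH.differentiable (by simp)
  have hDH : Differentiable ℝ (fderiv ℝ Hu) :=
    (hH.fderiv_right (m := (⊤ : ℕ∞)) ((by simp))).differentiable (by simp)
  have hLip := (hDH.differentiableAt (x := 0)).isBigO_sub
  obtain ⟨K, hKpos, hKw⟩ := hLip.exists_pos
  obtain ⟨ρ, hρ, hKball⟩ := Metric.eventually_nhds_iff.1 hKw.bound
  -- value of the third partial derivative at the origin
  have he3 : fderiv ℝ Hu 0 (0, 0, 1) = 1 := by
    have hc : HasDerivAt (fun s : ℝ => ((0:ℝ), (0:ℝ), s)) ((0:ℝ), (0:ℝ), (1:ℝ)) 0 :=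
      (hasDerivAt_const 0 (0:ℝ)).prodMk ((hasDerivAt_const 0 (0:ℝ)).prodMk (hasDerivAt_id 0))
    have hcomp : HasDerivAt (fun s : ℝ => Hu ((0:ℝ), (0:ℝ), s))
        (fderiv ℝ Hu ((0:ℝ),(0:ℝ),(0:ℝ)) ((0:ℝ), (0:ℝ), (1:ℝ))) 0 :=
      (hHdiff _).hasFDerivAt.comp_hasDerivAt 0 hc
    have : deriv (fun s : ℝ => Hu ((0:ℝ), (0:ℝ), s)) 0 = fderiv ℝ Hu 0 (0, 0, 1) := by
      rw [hcomp.deriv]; rfl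
    rw [← this, ← hH3]
  -- bounds
  obtain ⟨C₁, hC₁pos, hC₁w⟩ := h1.exists_pos
  obtain ⟨C₂, hC₂pos, hC₂w⟩ := h2.exists_pos
  obtain ⟨C₃, hC₃pos, hC₃w⟩ := h3.exists_pos
  have htT : Tendsto (fun x => (t₁ x, t₂ x, t₃ x)) l (𝓝 (0 : ℝ × ℝ × ℝ)) := by
    have hp : ∀ k : ℕ, 1 ≤ k → Tendsto (fun x => (x - α) ^ k) l (𝓝 0) := by
      intro k hk
      have : Tendsto (fun x : ℝ => (x - α) ^ k) (𝓝 α) (𝓝 ((α - α) ^ k)) :=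
        ((continuous_id.sub continuous_const).pow k).continuousAt
      rw [sub_self, zero_pow (by omega)] at this
      exact this.mono_left hl
    have e1 : Tendsto t₁ l (𝓝 0) := h1.trans_tendsto (hp 1 le_rfl)
    have e2 : Tendsto t₂ l (𝓝 0) := h2.trans_tendsto (hp 3 (by norm_num))
    have e3 : Tendsto t₃ l (𝓝 0) := h3.trans_tendsto (hp 2 (by norm_num))
    exact e1.prodMk_nhds (e2.prodMk_nhds e3)
  have hsmall : ∀ᶠ x in l, ‖(t₁ x, t₂ x, t₃ x)‖ < ρ := by
    have := htT.eventually (Metric.ball_mem_nhds (0 : ℝ × ℝ × ℝ) hρ)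
    filter_upwards [this] with x hx
    simpa [dist_eq_norm] using hx
  have hone : ∀ᶠ x in l, |x - α| ≤ 1 := by
    have : Tendsto (fun x => |x - α|) (𝓝 α) (𝓝 |α - α|) :=
      ((continuous_id.sub continuous_const).abs).continuousAt
    simp only [sub_self, abs_zero] at this
    exact hl (this.eventually_le_const (by norm_num))
  set M₂ : ℝ := ‖fderiv ℝ Hu 0 ((0:ℝ), (1:ℝ), (0:ℝ))‖ with hM₂
  refine IsBigO.of_bound (K * (C₁ + C₂ + C₃) * (C₂ + C₃) + M₂ * C₂) ?_
  filter_upwards [hC₁w.bound, hC₂w.bound, hC₃w.bound, hsmall, hone]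
    with x b1 b2 b3 hsm h1e
  simp only [Real.norm_eq_abs, abs_pow] at b1 b2 b3 ⊢
  simp only [pow_one] at b1
  have habs : |x - α| ^ 3 ≤ |x - α| := by
    calc |x - α| ^ 3 ≤ |x - α| ^ 1 :=
      pow_le_pow_of_le_one (abs_nonneg _) h1e (by norm_num)
    _ = |x - α| := pow_one _
  have habs2 : |x - α| ^ 2 ≤ |x - α| := by
    calc |x - α| ^ 2 ≤ |x - α| ^ 1 :=
      pow_le_pow_of_le_one (abs_nonneg _) h1e (by norm_num)
    _ = |x - α| := pow_one _
  have habs32 : |x - α| ^ 3 ≤ |x - α| ^ 2 :=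
    pow_le_pow_of_le_one (abs_nonneg _) h1e (by norm_num)
  -- mean value theorem on the segment
  set c : ℝ → ℝ × ℝ × ℝ := fun σ => (t₁ x, σ * t₂ x, σ * t₃ x) with hc
  have hφ : ∀ σ : ℝ, HasDerivAt (fun σ => Hu (c σ))
      (fderiv ℝ Hu (c σ) ((0:ℝ), t₂ x, t₃ x)) σ := by
    intro σ
    have hcσ : HasDerivAt c ((0:ℝ), t₂ x, t₃ x) σ := by
      refine (hasDerivAt_const σ (t₁ x)).prodMk (HasDerivAt.prodMk ?_ ?_)
      · simpa using (hasDerivAt_id σ).mul_const (t₂ x)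
      · simpa using (hasDerivAt_id σ).mul_const (t₃ x)
    exact (hHdiff _).hasFDerivAt.comp_hasDerivAt σ hcσ
  obtain ⟨σ₀, hσ₀, hslope⟩ := exists_hasDerivAt_eq_slope (fun σ => Hu (c σ)) _
    one_pos (fun σ _ => (hφ σ).continuousAt.continuousWithinAt) (fun σ _ => hφ σ)
  have hval : H (t₁ x) (t₂ x) (t₃ x) - H (t₁ x) 0 0
      = fderiv ℝ Hu (c σ₀) ((0:ℝ), t₂ x, t₃ x) := by
    rw [hslope]
    simp [hc, Hu]
  rw [hval]
  -- decompose the derivative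
  have hdec : fderiv ℝ Hu (c σ₀) ((0:ℝ), t₂ x, t₃ x)
      = (fderiv ℝ Hu (c σ₀) - fderiv ℝ Hu 0) ((0:ℝ), t₂ x, t₃ x)
        + t₂ x * (fderiv ℝ Hu 0 ((0:ℝ), (1:ℝ), (0:ℝ)))
        + t₃ x * (fderiv ℝ Hu 0 ((0:ℝ), (0:ℝ), (1:ℝ))) := by
    have hsum : ((0:ℝ), t₂ x, t₃ x)
        = t₂ x • ((0:ℝ), (1:ℝ), (0:ℝ)) + t₃ x • ((0:ℝ), (0:ℝ), (1:ℝ)) := by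
      simp [Prod.ext_iff]
    rw [ContinuousLinearMap.sub_apply]
    rw [hsum, map_add, map_smul, map_smul, map_add, map_smul, map_smul]
    simp only [smul_eq_mul]
    ring
  rw [hdec, he3]
  -- bounds
  have hqnorm : ‖c σ₀‖ ≤ ‖(t₁ x, t₂ x, t₃ x)‖ := by
    simp only [hc, Prod.norm_def, Real.norm_eq_abs]
    have h2' : |σ₀ * t₂ x| ≤ |t₂ x| := by
      rw [abs_mul]
      nlinarith [abs_nonneg (t₂ x), abs_of_pos hσ₀.1, hσ₀.2, abs_nonneg (σ₀ * t₂ x)]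
    have h3' : |σ₀ * t₃ x| ≤ |t₃ x| := by
      rw [abs_mul]
      nlinarith [abs_nonneg (t₃ x), abs_of_pos hσ₀.1, hσ₀.2]
    exact max_le_max le_rfl (max_le_max h2' h3')
  have hqball : ‖c σ₀‖ < ρ := lt_of_le_of_lt hqnorm hsm
  have hKq : ‖fderiv ℝ Hu (c σ₀) - fderiv ℝ Hu 0‖ ≤ K * ‖c σ₀‖ := by
    have := hKball (y := c σ₀) (by simpa [dist_eq_norm] using hqball)
    simpa using this
  have hTb : ‖(t₁ x, t₂ x, t₃ x)‖ ≤ (C₁ + C₂ + C₃) * |x - α| := by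
    simp only [Prod.norm_def, Real.norm_eq_abs]
    refine max_le ?_ (max_le ?_ ?_)
    · nlinarith [b1, abs_nonneg (x - α), hC₂pos.le, hC₃pos.le]
    · calc |t₂ x| ≤ C₂ * |x - α| ^ 3 := b2
        _ ≤ C₂ * |x - α| := by nlinarith [hC₂pos.le, habs]
        _ ≤ (C₁ + C₂ + C₃) * |x - α| := by nlinarith [abs_nonneg (x - α), hC₁pos.le, hC₃pos.le]
    · calc |t₃ x| ≤ C₃ * |x - α| ^ 2 := b3
        _ ≤ C₃ * |x - α| := by nlinarith [hC₃pos.le, habs2]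
        _ ≤ (C₁ + C₂ + C₃) * |x - α| := by nlinarith [abs_nonneg (x - α), hC₁pos.le, hC₂pos.le]
  have hvecb : ‖((0:ℝ), t₂ x, t₃ x)‖ ≤ (C₂ + C₃) * |x - α| ^ 2 := by
    simp only [Prod.norm_def, Real.norm_eq_abs, abs_zero]
    refine max_le (by positivity) (max_le ?_ ?_)
    · calc |t₂ x| ≤ C₂ * |x - α| ^ 3 := b2
        _ ≤ C₂ * |x - α| ^ 2 := by
            nlinarith [hC₂pos.le, habs32]
        _ ≤ (C₂ + C₃) * |x - α| ^ 2 := by nlinarith [pow_nonneg (abs_nonneg (x - α)) 2, hC₃pos.le]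
    · calc |t₃ x| ≤ C₃ * |x - α| ^ 2 := b3
        _ ≤ (C₂ + C₃) * |x - α| ^ 2 := by nlinarith [pow_nonneg (abs_nonneg (x - α)) 2, hC₂pos.le]
  have hA : |(fderiv ℝ Hu (c σ₀) - fderiv ℝ Hu 0) ((0:ℝ), t₂ x, t₃ x)|
      ≤ (K * ((C₁ + C₂ + C₃) * |x - α|)) * ((C₂ + C₃) * |x - α| ^ 2) := by
    calc |(fderiv ℝ Hu (c σ₀) - fderiv ℝ Hu 0) ((0:ℝ), t₂ x, t₃ x)|
        ≤ ‖fderiv ℝ Hu (c σ₀) - fderiv ℝ Hu 0‖ * ‖((0:ℝ), t₂ x, t₃ x)‖ :=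
          (fderiv ℝ Hu (c σ₀) - fderiv ℝ Hu 0).le_opNorm _
      _ ≤ (K * ((C₁ + C₂ + C₃) * |x - α|)) * ((C₂ + C₃) * |x - α| ^ 2) := by
          refine mul_le_mul ?_ hvecb (norm_nonneg _) ?_
          · exact hKq.trans (mul_le_mul_of_nonneg_left (hqnorm.trans hTb) hKpos.le)
          · positivity
  have hM2 : |t₂ x * fderiv ℝ Hu 0 ((0:ℝ), (1:ℝ), (0:ℝ))| ≤ (M₂ * C₂) * |x - α| ^ 3 := by
    rw [abs_mul]
    calc |t₂ x| * |fderiv ℝ Hu 0 ((0:ℝ), (1:ℝ), (0:ℝ))|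
        ≤ (C₂ * |x - α| ^ 3) * M₂ := by
          refine mul_le_mul b2 ?_ (abs_nonneg _) (by positivity)
          simp [hM₂, Real.norm_eq_abs]
      _ = (M₂ * C₂) * |x - α| ^ 3 := by ring
  calc |(fderiv ℝ Hu (c σ₀) - fderiv ℝ Hu 0) ((0:ℝ), t₂ x, t₃ x)
        + t₂ x * fderiv ℝ Hu 0 ((0:ℝ), (1:ℝ), (0:ℝ)) + t₃ x * 1 - t₃ x|
      = |(fderiv ℝ Hu (c σ₀) - fderiv ℝ Hu 0) ((0:ℝ), t₂ x, t₃ x)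
        + t₂ x * fderiv ℝ Hu 0 ((0:ℝ), (1:ℝ), (0:ℝ))| := by ring_nf
    _ ≤ |(fderiv ℝ Hu (c σ₀) - fderiv ℝ Hu 0) ((0:ℝ), t₂ x, t₃ x)|
        + |t₂ x * fderiv ℝ Hu 0 ((0:ℝ), (1:ℝ), (0:ℝ))| := abs_add_le _ _
    _ ≤ (K * ((C₁ + C₂ + C₃) * |x - α|)) * ((C₂ + C₃) * |x - α| ^ 2)
        + (M₂ * C₂) * |x - α| ^ 3 := add_le_add hA hM2
    _ = (K * (C₁ + C₂ + C₃) * (C₂ + C₃) + M₂ * C₂) * |x - α| ^ 3 := by ring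

section helpers
variable {α : ℝ} {l : Filter ℝ}

lemma mul_pow_isBigO {F G : ℝ → ℝ} {i j : ℕ}
    (hF : F =O[l] fun x => (x - α) ^ i) (hG : G =O[l] fun x => (x - α) ^ j) :
    (fun x => F x * G x) =O[l] fun x => (x - α) ^ (i + j) :=
  (hF.mul hG).congr_right fun x => (pow_add _ _ _).symm

lemma mul_bdd_isBigO {F G : ℝ → ℝ} {i : ℕ}
    (hF : F =O[l] fun x => (x - α) ^ i) (hG : G =O[l] fun _ => (1 : ℝ)) :
    (fun x => F x * G x) =O[l] fun x => (x - α) ^ i :=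
  (hF.mul hG).congr_right fun x => mul_one _

lemma bdd_mul_isBigO {F G : ℝ → ℝ} {i : ℕ}
    (hF : F =O[l] fun _ => (1 : ℝ)) (hG : G =O[l] fun x => (x - α) ^ i) :
    (fun x => F x * G x) =O[l] fun x => (x - α) ^ i :=
  (hF.mul hG).congr_right fun x => one_mul _

lemma cont_mul_pow_isBigO (hl : l ≤ 𝓝 α) (k : ℕ) {q : ℝ → ℝ} (hq : Continuous q) :
    (fun x => (x - α) ^ k * q x) =O[l] fun x => (x - α) ^ k :=
  mul_bdd_isBigO (isBigO_refl _ _) (tendsto_isBigO_one ((hq.tendsto _).mono_left hl))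

lemma isBigO_pow_down {i j : ℕ} (hij : j ≤ i) (hl : l ≤ 𝓝 α) {F : ℝ → ℝ}
    (h : F =O[l] fun x => (x - α) ^ i) : F =O[l] fun x => (x - α) ^ j :=
  h.trans (pow_isBigO_pow hij hl)

lemma pow_tendsto_zero (hl : l ≤ 𝓝 α) {k : ℕ} (hk : 1 ≤ k) :
    Tendsto (fun x => (x - α) ^ k) l (𝓝 0) := by
  have : Tendsto (fun x : ℝ => (x - α) ^ k) (𝓝 α) (𝓝 ((α - α) ^ k)) :=
    ((continuous_id.sub continuous_const).pow k).continuousAt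
  rw [sub_self, zero_pow (by omega)] at this
  exact this.mono_left hl

lemma cont_isBigO_one (hl : l ≤ 𝓝 α) {q : ℝ → ℝ} (hq : Continuous q) :
    q =O[l] fun _ => (1 : ℝ) :=
  tendsto_isBigO_one ((hq.tendsto α).mono_left hl)

lemma isBigO_tendsto_zero {F : ℝ → ℝ} {k : ℕ} (hk : 1 ≤ k) (hl : l ≤ 𝓝 α)
    (h : F =O[l] fun x => (x - α) ^ k) : Tendsto F l (𝓝 0) :=
  h.trans_tendsto (pow_tendsto_zero hl hk)

end helpers

set_option maxHeartbeats 2000000 in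
/-- Theorem 1 (seventh order part) for scheme (FD1): under the additional
conditions `∂²H/∂t₁² (0,0,0) = G''(0) + 2` and `∂H/∂t₃ (0,0,0) = 1`,
the scheme has local convergence order at least seven. -/
theorem fd1_order_seven
    (f G : ℝ → ℝ) (H : ℝ → ℝ → ℝ → ℝ) (α : ℝ)
    (U : Set ℝ) (hU : IsOpen U) (hαU : α ∈ U)
    (hf : ContDiffOn ℝ (⊤ : ℕ∞) f U)
    (hroot : f α = 0) (hf'α : deriv f α ≠ 0)
    (hG : ContDiff ℝ (⊤ : ℕ∞) G)
    (hH : ContDiff ℝ (⊤ : ℕ∞) (fun p : ℝ × ℝ × ℝ => H p.1 p.2.1 p.2.2))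
    (hG0 : G 0 = 1) (hG1 : deriv G 0 = 2)
    (hH0 : H 0 0 0 = 1)
    (hH1 : deriv (fun t₁ => H t₁ 0 0) 0 = 2)
    (hH2 : iteratedDeriv 2 (fun t₁ => H t₁ 0 0) 0 = iteratedDeriv 2 G 0 + 2)
    (hH3 : deriv (fun t₃ => H 0 0 t₃) 0 = 1)
    (y z Φ : ℝ → ℝ)
    (hy : ∀ x, y x = x - f x / deriv f x)
    (hz : ∀ x, z x = y x - G (f (y x) / f x) * (f (y x) / deriv f x))
    (hΦ : ∀ x, Φ x = z x -
      H (f (y x) / f x) (f (z x) / f x) (f (z x) / f (y x)) * (f (z x) / deriv f x)) :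
    ∃ δ > 0, ∃ C > 0, ∀ x : ℝ, 0 < |x - α| → |x - α| < δ →
      f x ≠ 0 → f (y x) ≠ 0 → |Φ x - α| ≤ C * |x - α| ^ 7 := by
  have htop : ((⊤ : ℕ∞) : WithTop ℕ∞) + 1 ≤ ((⊤ : ℕ∞) : WithTop ℕ∞) := by
    exact_mod_cast (le_top : (⊤ : ℕ∞) + 1 ≤ ⊤)
  obtain ⟨a, ha_def⟩ : ∃ a, deriv f α = a := ⟨_, rfl⟩
  have ha : a ≠ 0 := ha_def ▸ hf'α
  obtain ⟨c₂, hc₂⟩ : ∃ c, deriv (deriv f) α = 2 * a * c :=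
    ⟨deriv (deriv f) α / (2 * a), by field_simp⟩
  obtain ⟨c₃, hc₃⟩ : ∃ c, deriv (deriv (deriv f)) α = 6 * a * c :=
    ⟨deriv (deriv (deriv f)) α / (6 * a), by field_simp⟩
  obtain ⟨g₂, hg₂⟩ : ∃ g, iteratedDeriv 2 G 0 = 2 * g :=
    ⟨iteratedDeriv 2 G 0 / 2, by field_simp⟩
  set s : Set ℝ := {x | f x ≠ 0 ∧ f (y x) ≠ 0 ∧ x ≠ α} with hs_def
  set l : Filter ℝ := 𝓝[s] α with hl_def
  have hl : l ≤ 𝓝 α := nhdsWithin_le_nhds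
  have hlp : l ≤ 𝓝[≠] α := nhdsWithin_mono α (fun x hx => hx.2.2)
  have hmem : ∀ᶠ x in l, f x ≠ 0 ∧ f (y x) ≠ 0 ∧ x ≠ α := eventually_mem_nhdsWithin
  have hne : ∀ᶠ x in l, x ≠ α := hmem.mono fun x hx => hx.2.2
  -- smoothness of derivatives
  have hf1 : ContDiffOn ℝ (⊤ : ℕ∞) (deriv f) U := hf.deriv_of_isOpen hU htop
  -- Taylor expansions of f and deriv f at α
  have hF4 : (fun x => f x - (a * (x - α) + a * c₂ * (x - α) ^ 2 + a * c₃ * (x - α) ^ 3))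
      =O[𝓝 α] fun x => (x - α) ^ 4 := by
    refine (taylor4 hU hαU hf).congr_left fun x => ?_
    rw [hroot, ha_def, hc₂, hc₃]; ring
  have hF2 : (fun x => f x - (a * (x - α) + a * c₂ * (x - α) ^ 2))
      =O[𝓝 α] fun x => (x - α) ^ 3 := by
    have hd : (fun x => a * c₃ * (x - α) ^ 3) =O[𝓝 α] fun x => (x - α) ^ 3 :=
      (cont_mul_pow_isBigO le_rfl 3 continuous_const).congr_left fun x => mul_comm _ _
    exact ((isBigO_pow_down (by norm_num) le_rfl hF4).add hd).congr_left fun x => by ring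
  have hF1 : (fun x => f x - a * (x - α)) =O[𝓝 α] fun x => (x - α) ^ 2 := by
    have hd : (fun x => (x - α) ^ 2 * (a * c₂)) =O[𝓝 α] fun x => (x - α) ^ 2 :=
      cont_mul_pow_isBigO le_rfl 2 continuous_const
    exact ((isBigO_pow_down (by norm_num) le_rfl hF2).add hd).congr_left fun x => by ring
  have hF'3 : (fun x => deriv f x - (a + 2 * a * c₂ * (x - α) + 3 * a * c₃ * (x - α) ^ 2))
      =O[𝓝 α] fun x => (x - α) ^ 3 := by
    have h4 := taylor4 hU hαU hf1
    have hd : (fun x => (x - α) ^ 3 * (deriv (deriv (deriv (deriv f))) α / 6))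
        =O[𝓝 α] fun x => (x - α) ^ 3 :=
      cont_mul_pow_isBigO le_rfl 3 continuous_const
    refine ((isBigO_pow_down (by norm_num) le_rfl h4).add hd).congr_left fun x => ?_
    rw [ha_def, hc₂, hc₃]; ring
  -- divided versions on the punctured neighbourhood
  have hpne : ∀ᶠ t in 𝓝[≠] α, t ≠ α := eventually_mem_nhdsWithin
  have hWnhd : (fun t => f t / (t - α) - (a + a * c₂ * (t - α) + a * c₃ * (t - α) ^ 2))
      =O[𝓝[≠] α] fun t => (t - α) ^ 3 := by
    refine (isBigO_div_sub hpne (hF4.mono nhdsWithin_le_nhds)).congr' ?_ EventuallyEq.rfl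
    filter_upwards [hpne] with t ht
    field_simp [sub_ne_zero.2 ht]
  have hWynhd : (fun t => f t / (t - α) - (a + a * c₂ * (t - α)))
      =O[𝓝[≠] α] fun t => (t - α) ^ 2 := by
    refine (isBigO_div_sub hpne (hF2.mono nhdsWithin_le_nhds)).congr' ?_ EventuallyEq.rfl
    filter_upwards [hpne] with t ht
    field_simp [sub_ne_zero.2 ht]
  have hW1nhd : (fun t => f t / (t - α) - a) =O[𝓝[≠] α] fun t => (t - α) ^ 1 := by
    refine (isBigO_div_sub hpne (hF1.mono nhdsWithin_le_nhds)).congr' ?_ EventuallyEq.rfl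
    filter_upwards [hpne] with t ht
    field_simp [sub_ne_zero.2 ht]
  -- w = f x / (x - α) along l
  have hw3 : (fun x => f x / (x - α) - (a + a * c₂ * (x - α) + a * c₃ * (x - α) ^ 2))
      =O[l] fun x => (x - α) ^ 3 := hWnhd.mono hlp
  have htw : Tendsto (fun x => f x / (x - α)) l (𝓝 a) := by
    have h1 := isBigO_tendsto_zero le_rfl hl (hW1nhd.mono hlp)
    simpa using h1.add_const a
  have hwinv : (fun x => (f x / (x - α))⁻¹) =O[l] fun _ => (1 : ℝ) :=
    tendsto_isBigO_one (htw.inv₀ ha)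
  have hwne : ∀ᶠ x in l, f x / (x - α) ≠ 0 := by
    filter_upwards [hmem] with x hx
    exact div_ne_zero hx.1 (sub_ne_zero.2 hx.2.2)
  -- 1 / deriv f
  have hf1contAt : ContinuousAt (deriv f) α :=
    hf1.continuousOn.continuousAt (hU.mem_nhds hαU)
  have htf1 : Tendsto (deriv f) l (𝓝 a) := by
    rw [← ha_def]; exact hf1contAt.tendsto.mono_left hl
  have hf1ne : ∀ᶠ x in l, deriv f x ≠ 0 := htf1.eventually_ne ha
  have hIvb : (fun x => (deriv f x)⁻¹) =O[l] fun _ => (1 : ℝ) :=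
    tendsto_isBigO_one (htf1.inv₀ ha)
  have hF'3l := hF'3.mono hl
  have hIv1 : (fun x => (deriv f x)⁻¹ - 1 / a * (1 - 2 * c₂ * (x - α)))
      =O[l] fun x => (x - α) ^ 2 := by
    refine inv_sub_isBigO hf1ne hIvb ?_
    have hpoly : (fun x => (x - α) ^ 2 * ((4 * c₂ ^ 2 - 3 * c₃) + 6 * c₂ * c₃ * (x - α)))
        =O[l] fun x => (x - α) ^ 2 :=
      cont_mul_pow_isBigO hl 2 (by fun_prop)
    have hrem : (fun x => (deriv f x - (a + 2 * a * c₂ * (x - α) + 3 * a * c₃ * (x - α) ^ 2))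
        * (1 / a * (1 - 2 * c₂ * (x - α)))) =O[l] fun x => (x - α) ^ 2 :=
      isBigO_pow_down (by norm_num) hl
        (mul_bdd_isBigO (hF'3.mono hl) (cont_isBigO_one hl (by fun_prop)))
    refine (hpoly.sub hrem).congr_left fun x => ?_
    field_simp
    ring
  have hIv2 : (fun x => (deriv f x)⁻¹
      - 1 / a * (1 - 2 * c₂ * (x - α) + (4 * c₂ ^ 2 - 3 * c₃) * (x - α) ^ 2))
      =O[l] fun x => (x - α) ^ 3 := by
    refine inv_sub_isBigO hf1ne hIvb ?_
    have hpoly : (fun x => (x - α) ^ 3 * ((-8 * c₂ ^ 3 + 12 * c₂ * c₃)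
        + (-3 * c₃ * (4 * c₂ ^ 2 - 3 * c₃)) * (x - α)))
        =O[l] fun x => (x - α) ^ 3 :=
      cont_mul_pow_isBigO hl 3 (by fun_prop)
    have hrem : (fun x => (deriv f x - (a + 2 * a * c₂ * (x - α) + 3 * a * c₃ * (x - α) ^ 2))
        * (1 / a * (1 - 2 * c₂ * (x - α) + (4 * c₂ ^ 2 - 3 * c₃) * (x - α) ^ 2)))
        =O[l] fun x => (x - α) ^ 3 :=
      mul_bdd_isBigO (hF'3.mono hl) (cont_isBigO_one hl (by fun_prop))
    refine (hpoly.sub hrem).congr_left fun x => ?_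
    field_simp
    ring
  have heyq : ∀ᶠ x in l, y x - α = ((x - α) * deriv f x - f x) * (deriv f x)⁻¹ := by
    filter_upwards [hf1ne] with x hx
    rw [hy x]
    field_simp
    ring
  have hN : (fun x => ((x - α) * deriv f x - f x)
      - (a * c₂ * (x - α) ^ 2 + 2 * a * c₃ * (x - α) ^ 3)) =O[l] fun x => (x - α) ^ 4 := by
    have h1 : (fun x => (x - α) *
        (deriv f x - (a + 2 * a * c₂ * (x - α) + 3 * a * c₃ * (x - α) ^ 2)))
        =O[l] fun x => (x - α) ^ 4 :=
      mul_pow_isBigO (i := 1) ((isBigO_refl _ _).congr_right fun x => (pow_one _).symm) hF'3l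
    exact (h1.sub (hF4.mono hl)).congr_left fun x => by ring
  have hEy4 : (fun x => (y x - α) - (c₂ * (x - α) ^ 2 + (2 * c₃ - 2 * c₂ ^ 2) * (x - α) ^ 3))
      =O[l] fun x => (x - α) ^ 4 := by
    have p1 : (fun x => (((x - α) * deriv f x - f x)
        - (a * c₂ * (x - α) ^ 2 + 2 * a * c₃ * (x - α) ^ 3)) * (deriv f x)⁻¹)
        =O[l] fun x => (x - α) ^ 4 := mul_bdd_isBigO hN hIvb
    have hP23 : (fun x => a * c₂ * (x - α) ^ 2 + 2 * a * c₃ * (x - α) ^ 3)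
        =O[l] fun x => (x - α) ^ 2 :=
      (cont_mul_pow_isBigO hl 2 (q := fun x => a * c₂ + 2 * a * c₃ * (x - α))
        (by fun_prop)).congr_left fun x => by ring
    have p2 : (fun x => (a * c₂ * (x - α) ^ 2 + 2 * a * c₃ * (x - α) ^ 3)
        * ((deriv f x)⁻¹ - 1 / a * (1 - 2 * c₂ * (x - α)))) =O[l] fun x => (x - α) ^ 4 :=
      mul_pow_isBigO hP23 hIv1
    have p3 : (fun x => -(4 * c₂ * c₃) * (x - α) ^ 4) =O[l] fun x => (x - α) ^ 4 :=
      (cont_mul_pow_isBigO hl 4 continuous_const).congr_left fun x => mul_comm _ _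
    refine ((p1.add p2).add p3).congr' ?_ EventuallyEq.rfl
    filter_upwards [heyq] with x hx
    rw [hx]
    field_simp
    ring
  have hEy3 : (fun x => (y x - α) - c₂ * (x - α) ^ 2) =O[l] fun x => (x - α) ^ 3 := by
    have hd : (fun x => (x - α) ^ 3 * (2 * c₃ - 2 * c₂ ^ 2)) =O[l] fun x => (x - α) ^ 3 :=
      cont_mul_pow_isBigO hl 3 continuous_const
    exact ((isBigO_pow_down (by norm_num) hl hEy4).add hd).congr_left fun x => by ring
  have hEy2 : (fun x => y x - α) =O[l] fun x => (x - α) ^ 2 := by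
    have hd : (fun x => (x - α) ^ 2 * c₂) =O[l] fun x => (x - α) ^ 2 :=
      cont_mul_pow_isBigO hl 2 continuous_const
    exact ((isBigO_pow_down (by norm_num) hl hEy3).add hd).congr_left fun x => by ring
  have hEy2sq : (fun x => (y x - α) ^ 2) =O[l] fun x => (x - α) ^ 4 :=
    (hEy2.pow 2).congr_right fun x => by rw [← pow_mul]
  have hyney : ∀ᶠ x in l, y x ≠ α := by
    filter_upwards [hmem] with x hx
    exact fun h => hx.2.1 (by rw [h, hroot])
  have htyl0 : Tendsto y l (𝓝 α) := by
    have h1 := isBigO_tendsto_zero (by norm_num) hl hEy2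
    simpa using h1.add_const α
  have htyl : Tendsto y l (𝓝[≠] α) := by
    rw [tendsto_nhdsWithin_iff]
    exact ⟨htyl0, hyney.mono fun x hx => hx⟩
  -- wy = f (y x) / (y x - α)
  have hwy2 : (fun x => f (y x) / (y x - α) - (a + a * c₂ * (y x - α)))
      =O[l] fun x => (x - α) ^ 4 := by
    have h1 := hWynhd.comp_tendsto htyl
    exact (h1.trans hEy2sq).congr_left fun x => rfl
  have hwya : (fun x => f (y x) / (y x - α) - a) =O[l] fun x => (x - α) ^ 2 := by
    have hd : (fun x => a * c₂ * (y x - α)) =O[l] fun x => (x - α) ^ 2 :=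
      hEy2.const_mul_left _
    exact ((isBigO_pow_down (by norm_num) hl hwy2).add hd).congr_left fun x => by ring
  have htwy : Tendsto (fun x => f (y x) / (y x - α)) l (𝓝 a) := by
    have h1 := isBigO_tendsto_zero (by norm_num) hl hwya
    simpa using h1.add_const a
  have hwyne : ∀ᶠ x in l, f (y x) / (y x - α) ≠ 0 := by
    filter_upwards [hmem, hyney] with x hx hy'
    exact div_ne_zero hx.2.1 (sub_ne_zero.2 hy')
  have hwyinv : (fun x => (f (y x) / (y x - α))⁻¹) =O[l] fun _ => (1 : ℝ) :=
    tendsto_isBigO_one (htwy.inv₀ ha)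
  have hIwy : (fun x => (f (y x) / (y x - α))⁻¹ - 1 / a) =O[l] fun x => (x - α) ^ 2 := by
    refine inv_sub_isBigO hwyne hwyinv ?_
    have h1 : (fun x => -(1 / a) * (f (y x) / (y x - α) - a)) =O[l] fun x => (x - α) ^ 2 :=
      hwya.const_mul_left _
    refine h1.congr_left fun x => ?_
    generalize f (y x) / (y x - α) = X
    field_simp
    ring
  have hP1 : (fun x => c₂ * (x - α) + (2 * c₃ - 3 * c₂ ^ 2) * (x - α) ^ 2)
      =O[l] fun x => (x - α) ^ 1 :=
    (cont_mul_pow_isBigO hl 1 (q := fun x => c₂ + (2 * c₃ - 3 * c₂ ^ 2) * (x - α))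
      (by fun_prop)).congr_left fun x => by ring
  have hnum : (fun x => f (y x) - (c₂ * (x - α) + (2 * c₃ - 3 * c₂ ^ 2) * (x - α) ^ 2) * f x)
      =O[l] fun x => (x - α) ^ 4 := by
    have A1 : (fun x => (y x - α) * (f (y x) / (y x - α) - (a + a * c₂ * (y x - α))))
        =O[l] fun x => (x - α) ^ 4 :=
      isBigO_pow_down (by norm_num) hl (mul_pow_isBigO hEy2 hwy2)
    have A2 : (fun x => a * ((y x - α)
        - (c₂ * (x - α) ^ 2 + (2 * c₃ - 2 * c₂ ^ 2) * (x - α) ^ 3)))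
        =O[l] fun x => (x - α) ^ 4 := hEy4.const_mul_left _
    have A3 : (fun x => a * c₂ * (y x - α) ^ 2) =O[l] fun x => (x - α) ^ 4 :=
      hEy2sq.const_mul_left _
    have A4 : (fun x => (c₂ * (x - α) + (2 * c₃ - 3 * c₂ ^ 2) * (x - α) ^ 2)
        * (f x - (a * (x - α) + a * c₂ * (x - α) ^ 2 + a * c₃ * (x - α) ^ 3)))
        =O[l] fun x => (x - α) ^ 4 :=
      isBigO_pow_down (by norm_num) hl (mul_pow_isBigO hP1 (hF4.mono hl))
    have A5 : (fun x => (x - α) ^ 4 * ((3 * a * c₂ ^ 3 - 3 * a * c₂ * c₃)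
        + (3 * a * c₂ ^ 2 * c₃ - 2 * a * c₃ ^ 2) * (x - α)))
        =O[l] fun x => (x - α) ^ 4 :=
      cont_mul_pow_isBigO hl 4 (by fun_prop)
    refine ((((A1.add A2).add A3).sub A4).add A5).congr' ?_ EventuallyEq.rfl
    filter_upwards [hyney] with x hx
    field_simp [sub_ne_zero.2 hx]
    ring
  have hT1p : (fun x => f (y x) / f x
      - (c₂ * (x - α) + (2 * c₃ - 3 * c₂ ^ 2) * (x - α) ^ 2)) =O[l] fun x => (x - α) ^ 3 := by
    have hdiv := isBigO_div_sub hne hnum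
    have hmul := mul_bdd_isBigO hdiv hwinv
    refine hmul.congr' ?_ EventuallyEq.rfl
    filter_upwards [hmem] with x hx
    have hxa : x - α ≠ 0 := sub_ne_zero.2 hx.2.2
    field_simp [hx.1, hxa]
  have hT1 : (fun x => f (y x) / f x) =O[l] fun x => (x - α) ^ 1 :=
    ((isBigO_pow_down (by norm_num) hl hT1p).add hP1).congr_left fun x => by ring
  have hT1c : Tendsto (fun x => f (y x) / f x) l (𝓝 0) :=
    isBigO_tendsto_zero le_rfl hl hT1
  have hT1me : (fun x => f (y x) / f x - c₂ * (x - α)) =O[l] fun x => (x - α) ^ 2 := by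
    have hd : (fun x => (x - α) ^ 2 * (2 * c₃ - 3 * c₂ ^ 2)) =O[l] fun x => (x - α) ^ 2 :=
      cont_mul_pow_isBigO hl 2 continuous_const
    exact ((isBigO_pow_down (by norm_num) hl hT1p).add hd).congr_left fun x => by ring
  have hT1pl : (fun x => f (y x) / f x + c₂ * (x - α)) =O[l] fun x => (x - α) ^ 1 := by
    have hd : (fun x => c₂ * (x - α)) =O[l] fun x => (x - α) ^ 1 :=
      (cont_mul_pow_isBigO hl 1 (q := fun _ => c₂) continuous_const).congr_left
        fun x => by ring
    exact hT1.add hd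
  have hT1sq : (fun x => (f (y x) / f x) ^ 2 - c₂ ^ 2 * (x - α) ^ 2)
      =O[l] fun x => (x - α) ^ 3 :=
    (mul_pow_isBigO hT1me hT1pl).congr_left fun x => by ring
  have hT1cube : (fun x => (f (y x) / f x) ^ 3) =O[l] fun x => (x - α) ^ 3 :=
    (hT1.pow 3).congr_right fun x => by rw [← pow_mul]
  -- Taylor expansion of G at 0
  have hiter2 : ∀ q : ℝ → ℝ, iteratedDeriv 2 q 0 = deriv (deriv q) 0 := fun q => by
    rw [iteratedDeriv_succ, iteratedDeriv_one]
  have hddG : deriv (deriv G) 0 = 2 * g₂ := by rw [← hiter2, hg₂]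
  have hRG : (fun t => G t - (1 + 2 * t + g₂ * t ^ 2)) =O[𝓝 0] fun t => t ^ 3 := by
    have hGt := taylor4 isOpen_univ (mem_univ (0:ℝ)) hG.contDiffOn
    have hd : (fun t : ℝ => (t - 0) ^ 3 * (deriv (deriv (deriv G)) 0 / 6))
        =O[𝓝 (0:ℝ)] fun t => (t - 0) ^ 3 :=
      cont_mul_pow_isBigO le_rfl 3 continuous_const
    refine ((isBigO_pow_down (by norm_num) le_rfl hGt).add hd).congr
      (fun t => ?_) (fun t => by ring)
    rw [hG0, hG1, hddG]; ring
  have hGc : (fun x => G (f (y x) / f x)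
      - (1 + 2 * (f (y x) / f x) + g₂ * (f (y x) / f x) ^ 2)) =O[l] fun x => (x - α) ^ 3 :=
    (hRG.comp_tendsto hT1c).trans hT1cube
  have hΓG : (fun x => G (f (y x) / f x)
      - (1 + 2 * c₂ * (x - α) + (4 * c₃ + (g₂ - 6) * c₂ ^ 2) * (x - α) ^ 2))
      =O[l] fun x => (x - α) ^ 3 := by
    refine ((hGc.add (hT1p.const_mul_left 2)).add
      (hT1sq.const_mul_left g₂)).congr_left fun x => by ring
  have hΓGb : (fun x => G (f (y x) / f x)) =O[l] fun _ => (1 : ℝ) :=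
    tendsto_isBigO_one ((hG.continuous.tendsto 0).comp hT1c)
  -- the second-step bracket B
  set B : ℝ → ℝ := fun x => 1 - G (f (y x) / f x) * (f (y x) / (y x - α)) * (deriv f x)⁻¹
    with hB_def
  have hzeq : ∀ᶠ x in l, z x - α = (y x - α) * B x := by
    filter_upwards [hyney, hf1ne] with x hx hf1x
    rw [hz x, hB_def]
    field_simp [sub_ne_zero.2 hx, hf1x]
    ring
  have hrw : (fun x => f (y x) / (y x - α) - (a + a * c₂ ^ 2 * (x - α) ^ 2))
      =O[l] fun x => (x - α) ^ 3 := by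
    refine ((isBigO_pow_down (by norm_num) hl hwy2).add
      (hEy3.const_mul_left (a * c₂))).congr_left fun x => by ring
  have hwyb : (fun x => f (y x) / (y x - α)) =O[l] fun _ => (1 : ℝ) :=
    tendsto_isBigO_one htwy
  have hPGb : (fun x => 1 + 2 * c₂ * (x - α) + (4 * c₃ + (g₂ - 6) * c₂ ^ 2) * (x - α) ^ 2)
      =O[l] fun _ => (1 : ℝ) := cont_isBigO_one hl (by fun_prop)
  have hPwb : (fun x => a + a * c₂ ^ 2 * (x - α) ^ 2) =O[l] fun _ => (1 : ℝ) :=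
    cont_isBigO_one hl (by fun_prop)
  have hB : (fun x => B x - ((5 - g₂) * c₂ ^ 2 - c₃) * (x - α) ^ 2)
      =O[l] fun x => (x - α) ^ 3 := by
    have b1 : (fun x => (G (f (y x) / f x)
        - (1 + 2 * c₂ * (x - α) + (4 * c₃ + (g₂ - 6) * c₂ ^ 2) * (x - α) ^ 2))
        * (f (y x) / (y x - α)) * (deriv f x)⁻¹) =O[l] fun x => (x - α) ^ 3 :=
      mul_bdd_isBigO (mul_bdd_isBigO hΓG hwyb) hIvb
    have b2 : (fun x => (1 + 2 * c₂ * (x - α) + (4 * c₃ + (g₂ - 6) * c₂ ^ 2) * (x - α) ^ 2)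
        * (f (y x) / (y x - α) - (a + a * c₂ ^ 2 * (x - α) ^ 2)) * (deriv f x)⁻¹)
        =O[l] fun x => (x - α) ^ 3 :=
      mul_bdd_isBigO (bdd_mul_isBigO hPGb hrw) hIvb
    have b3 : (fun x => (1 + 2 * c₂ * (x - α) + (4 * c₃ + (g₂ - 6) * c₂ ^ 2) * (x - α) ^ 2)
        * ((a + a * c₂ ^ 2 * (x - α) ^ 2) * ((deriv f x)⁻¹
          - 1 / a * (1 - 2 * c₂ * (x - α) + (4 * c₂ ^ 2 - 3 * c₃) * (x - α) ^ 2))))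
        =O[l] fun x => (x - α) ^ 3 :=
      bdd_mul_isBigO hPGb (bdd_mul_isBigO hPwb hIv2)
    have b4 : (fun x => (x - α) ^ 3 * ((14 * c₂ * c₃ - 20 * c₂ ^ 3 + 2 * g₂ * c₂ ^ 3)
        + (12 * c₃ ^ 2 - 35 * c₂ ^ 2 * c₃ + 3 * g₂ * c₂ ^ 2 * c₃ + 30 * c₂ ^ 4
          - 5 * g₂ * c₂ ^ 4) * (x - α)
        + (14 * c₂ ^ 3 * c₃ - 20 * c₂ ^ 5 + 2 * g₂ * c₂ ^ 5) * (x - α) ^ 2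
        + (12 * c₂ ^ 2 * c₃ ^ 2 - 34 * c₂ ^ 4 * c₃ + 3 * g₂ * c₂ ^ 4 * c₃ + 24 * c₂ ^ 6
          - 4 * g₂ * c₂ ^ 6) * (x - α) ^ 3)) =O[l] fun x => (x - α) ^ 3 :=
      cont_mul_pow_isBigO hl 3 (by fun_prop)
    refine (((b4.sub b1).sub b2).sub b3).congr' ?_ EventuallyEq.rfl
    refine Eventually.of_forall fun x => ?_
    simp only [hB_def]
    generalize G (f (y x) / f x) = Γ
    generalize f (y x) / (y x - α) = W
    generalize (deriv f x)⁻¹ = Iv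
    field_simp
    ring
  have hB2 : B =O[l] fun x => (x - α) ^ 2 := by
    have hd : (fun x => (x - α) ^ 2 * ((5 - g₂) * c₂ ^ 2 - c₃)) =O[l] fun x => (x - α) ^ 2 :=
      cont_mul_pow_isBigO hl 2 continuous_const
    exact ((isBigO_pow_down (by norm_num) hl hB).add hd).congr_left fun x => by ring
  have hEz : (fun x => z x - α) =O[l] fun x => (x - α) ^ 4 :=
    (mul_pow_isBigO hEy2 hB2).congr' (hzeq.mono fun x hx => hx.symm) EventuallyEq.rfl
  have htz0 : Tendsto z l (𝓝 α) := by
    have h1 := isBigO_tendsto_zero (by norm_num) hl hEz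
    simpa using h1.add_const α
  have hRz : (fun x => f (z x) - a * (z x - α)) =O[l] fun x => (z x - α) ^ 2 :=
    (hF1.comp_tendsto htz0).congr_left fun x => rfl
  have hZsq : (fun x => (z x - α) ^ 2) =O[l] fun x => (x - α) ^ 8 :=
    (hEz.pow 2).congr_right fun x => by rw [← pow_mul]
  have hRz8 : (fun x => f (z x) - a * (z x - α)) =O[l] fun x => (x - α) ^ 8 := hRz.trans hZsq
  have hRz7 : (fun x => f (z x) - a * (z x - α)) =O[l] fun x => (x - α) ^ 7 :=
    isBigO_pow_down (by norm_num) hl hRz8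
  have hRzdiv : (fun x => (f (z x) - a * (z x - α)) / (y x - α)) =O[l] fun x => (x - α) ^ 6 := by
    obtain ⟨C, hC⟩ := hRz.bound
    have h6 : (fun x => (y x - α) * (B x) ^ 2) =O[l] fun x => (x - α) ^ 6 :=
      mul_pow_isBigO hEy2 ((hB2.pow 2).congr_right fun x => by rw [← pow_mul])
    refine IsBigO.trans (IsBigO.of_bound C ?_) h6
    filter_upwards [hC, hzeq, hyney] with x hC' hz' hy'
    have hey : (0:ℝ) < |y x - α| := abs_pos.2 (sub_ne_zero.2 hy')
    simp only [Real.norm_eq_abs] at hC' ⊢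
    rw [abs_div, div_le_iff₀ hey]
    calc |f (z x) - a * (z x - α)| ≤ C * |(z x - α) ^ 2| := hC'
      _ = C * |(y x - α) * B x ^ 2| * |y x - α| := by
          rw [hz']
          simp only [abs_pow, abs_mul]
          ring
  have ht2eq : ∀ᶠ x in l, f (z x) / f x = (f (z x) / (x - α)) * (f x / (x - α))⁻¹ := by
    filter_upwards [hmem] with x hx
    have hxa : x - α ≠ 0 := sub_ne_zero.2 hx.2.2
    field_simp [hx.1, hxa]
  have hfz4 : (fun x => f (z x)) =O[l] fun x => (x - α) ^ 4 :=
    ((hEz.const_mul_left a).add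
      (isBigO_pow_down (by norm_num) hl hRz8)).congr_left fun x => by ring
  have hdivz : (fun x => f (z x) / (x - α)) =O[l] fun x => (x - α) ^ 3 :=
    isBigO_div_sub hne hfz4
  have hT2 : (fun x => f (z x) / f x) =O[l] fun x => (x - α) ^ 3 :=
    (mul_bdd_isBigO hdivz hwinv).congr' (ht2eq.mono fun x hx => hx.symm) EventuallyEq.rfl
  have ht3eq : ∀ᶠ x in l, f (z x) / f (y x)
      = a * B x * (f (y x) / (y x - α))⁻¹
        + ((f (z x) - a * (z x - α)) / (y x - α)) * (f (y x) / (y x - α))⁻¹ := by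
    filter_upwards [hmem, hyney, hzeq] with x hx hy' hz'
    have heyne : y x - α ≠ 0 := sub_ne_zero.2 hy'
    rw [hz']
    field_simp [hx.2.1, heyne]
    ring
  have hT3p : (fun x => f (z x) / f (y x) - ((5 - g₂) * c₂ ^ 2 - c₃) * (x - α) ^ 2)
      =O[l] fun x => (x - α) ^ 3 := by
    have p1 : (fun x => a * (B x * ((f (y x) / (y x - α))⁻¹ - 1 / a)))
        =O[l] fun x => (x - α) ^ 3 :=
      (isBigO_pow_down (by norm_num) hl (mul_pow_isBigO hB2 hIwy)).const_mul_left a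
    have p3 : (fun x => ((f (z x) - a * (z x - α)) / (y x - α)) * (f (y x) / (y x - α))⁻¹)
        =O[l] fun x => (x - α) ^ 3 :=
      isBigO_pow_down (by norm_num) hl (mul_bdd_isBigO hRzdiv hwyinv)
    refine ((p1.add hB).add p3).congr' ?_ EventuallyEq.rfl
    filter_upwards [ht3eq] with x hx
    rw [hx, hB_def]
    generalize (f (y x) / (y x - α))⁻¹ = Iw
    generalize (f (z x) - a * (z x - α)) / (y x - α) = Rd
    field_simp
    ring
  have hT3 : (fun x => f (z x) / f (y x)) =O[l] fun x => (x - α) ^ 2 := by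
    have hd : (fun x => (x - α) ^ 2 * (((5 - g₂) * c₂ ^ 2 - c₃)))
        =O[l] fun x => (x - α) ^ 2 := cont_mul_pow_isBigO hl 2 continuous_const
    exact ((isBigO_pow_down (by norm_num) hl hT3p).add hd).congr_left fun x => by ring
  -- the H terms
  have hHd := H_decomp hH hH3 hl hT1 hT2 hT3
  have hHgC : ContDiff ℝ (⊤ : ℕ∞) (fun t : ℝ => H t 0 0) :=
    hH.comp (contDiff_id.prodMk (contDiff_const.prodMk contDiff_const))
  have hddHg : deriv (deriv (fun t : ℝ => H t 0 0)) 0 = 2 * g₂ + 2 := by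
    rw [← hiter2]
    show iteratedDeriv 2 (fun t₁ => H t₁ 0 0) 0 = 2 * g₂ + 2
    rw [hH2, hg₂]
  have hRHg : (fun t => H t 0 0 - (1 + 2 * t + (g₂ + 1) * t ^ 2)) =O[𝓝 0] fun t => t ^ 3 := by
    have hHgt := taylor4 isOpen_univ (mem_univ (0:ℝ)) hHgC.contDiffOn
    have hd : (fun t : ℝ => (t - 0) ^ 3 * (deriv (deriv (deriv (fun t : ℝ => H t 0 0))) 0 / 6))
        =O[𝓝 (0:ℝ)] fun t => (t - 0) ^ 3 :=
      cont_mul_pow_isBigO le_rfl 3 continuous_const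
    refine ((isBigO_pow_down (by norm_num) le_rfl hHgt).add hd).congr
      (fun t => ?_) (fun t => by ring)
    show H t 0 0 - H 0 0 0 - deriv (fun t : ℝ => H t 0 0) 0 * (t - 0)
        - deriv (deriv (fun t : ℝ => H t 0 0)) 0 / 2 * (t - 0) ^ 2
        - deriv (deriv (deriv (fun t : ℝ => H t 0 0))) 0 / 6 * (t - 0) ^ 3
        + (t - 0) ^ 3 * (deriv (deriv (deriv (fun t : ℝ => H t 0 0))) 0 / 6)
        = H t 0 0 - (1 + 2 * t + (g₂ + 1) * t ^ 2)
    rw [hH0, hH1, hddHg]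
    ring
  have hHgc : (fun x => H (f (y x) / f x) 0 0 - (1 + 2 * (f (y x) / f x)
      + (g₂ + 1) * (f (y x) / f x) ^ 2)) =O[l] fun x => (x - α) ^ 3 :=
    (hRHg.comp_tendsto hT1c).trans hT1cube
  have hΓHg : (fun x => H (f (y x) / f x) 0 0
      - (1 + 2 * c₂ * (x - α) + (4 * c₃ + (g₂ - 5) * c₂ ^ 2) * (x - α) ^ 2))
      =O[l] fun x => (x - α) ^ 3 :=
    ((hHgc.add (hT1p.const_mul_left 2)).add
      (hT1sq.const_mul_left (g₂ + 1))).congr_left fun x => by ring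
  have hΓH : (fun x => H (f (y x) / f x) (f (z x) / f x) (f (z x) / f (y x))
      - (1 + 2 * c₂ * (x - α) + 3 * c₃ * (x - α) ^ 2)) =O[l] fun x => (x - α) ^ 3 :=
    ((hHd.add hΓHg).add hT3p).congr_left fun x => by ring
  have hT2c : Tendsto (fun x => f (z x) / f x) l (𝓝 0) :=
    isBigO_tendsto_zero (by norm_num) hl hT2
  have hT3c : Tendsto (fun x => f (z x) / f (y x)) l (𝓝 0) :=
    isBigO_tendsto_zero (by norm_num) hl hT3
  have hΓHb : (fun x => H (f (y x) / f x) (f (z x) / f x) (f (z x) / f (y x)))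
      =O[l] fun _ => (1 : ℝ) := by
    have htT : Tendsto (fun x => (f (y x) / f x, f (z x) / f x, f (z x) / f (y x))) l
        (𝓝 (0 : ℝ × ℝ × ℝ)) := hT1c.prodMk_nhds (hT2c.prodMk_nhds hT3c)
    exact tendsto_isBigO_one ((hH.continuous.tendsto (0 : ℝ × ℝ × ℝ)).comp htT)
  -- final bracket
  have hbr : (fun x => 1 - a * H (f (y x) / f x) (f (z x) / f x) (f (z x) / f (y x))
      * (deriv f x)⁻¹) =O[l] fun x => (x - α) ^ 3 := by
    have r1 : (fun x => a * ((H (f (y x) / f x) (f (z x) / f x) (f (z x) / f (y x))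
        - (1 + 2 * c₂ * (x - α) + 3 * c₃ * (x - α) ^ 2)) * (deriv f x)⁻¹))
        =O[l] fun x => (x - α) ^ 3 := (mul_bdd_isBigO hΓH hIvb).const_mul_left a
    have r2 : (fun x => a * ((1 + 2 * c₂ * (x - α) + 3 * c₃ * (x - α) ^ 2)
        * ((deriv f x)⁻¹
          - 1 / a * (1 - 2 * c₂ * (x - α) + (4 * c₂ ^ 2 - 3 * c₃) * (x - α) ^ 2))))
        =O[l] fun x => (x - α) ^ 3 :=
      (bdd_mul_isBigO (cont_isBigO_one hl (by fun_prop)) hIv2).const_mul_left a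
    have r3 : (fun x => (x - α) ^ 3 * ((-8 * c₂ ^ 3 + 12 * c₂ * c₃)
        + (-12 * c₂ ^ 2 * c₃ + 9 * c₃ ^ 2) * (x - α))) =O[l] fun x => (x - α) ^ 3 :=
      cont_mul_pow_isBigO hl 3 (by fun_prop)
    refine ((r3.sub r1).sub r2).congr' ?_ EventuallyEq.rfl
    refine Eventually.of_forall fun x => ?_
    generalize H (f (y x) / f x) (f (z x) / f x) (f (z x) / f (y x)) = Γ
    generalize (deriv f x)⁻¹ = Iv
    field_simp
    ring
  have hΦeq : ∀ᶠ x in l, Φ x - α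
      = (y x - α) * B x * (1 - a * H (f (y x) / f x) (f (z x) / f x) (f (z x) / f (y x))
          * (deriv f x)⁻¹)
        - H (f (y x) / f x) (f (z x) / f x) (f (z x) / f (y x))
          * ((f (z x) - a * (z x - α)) * (deriv f x)⁻¹) := by
    filter_upwards [hzeq] with x hz'
    rw [hΦ x, ← hz']
    ring
  have hΦ7 : (fun x => Φ x - α) =O[l] fun x => (x - α) ^ 7 := by
    have m1 : (fun x => (y x - α) * B x
        * (1 - a * H (f (y x) / f x) (f (z x) / f x) (f (z x) / f (y x)) * (deriv f x)⁻¹))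
        =O[l] fun x => (x - α) ^ 7 :=
      mul_pow_isBigO (mul_pow_isBigO hEy2 hB2) hbr
    have m2 : (fun x => H (f (y x) / f x) (f (z x) / f x) (f (z x) / f (y x))
        * ((f (z x) - a * (z x - α)) * (deriv f x)⁻¹)) =O[l] fun x => (x - α) ^ 7 :=
      bdd_mul_isBigO hΓHb (mul_bdd_isBigO hRz7 hIvb)
    exact (m1.sub m2).congr' (hΦeq.mono fun x hx => hx.symm) EventuallyEq.rfl
  -- extract the final statement
  obtain ⟨C, hC⟩ := hΦ7.bound
  rw [hl_def] at hC
  have hC' := eventually_nhdsWithin_iff.1 hC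
  obtain ⟨δ, hδpos, hδ⟩ := Metric.eventually_nhds_iff.1 hC'
  refine ⟨δ, hδpos, max C 1, lt_max_of_lt_right one_pos, fun x hx0 hxδ hfx hfy => ?_⟩
  have hxα : x ≠ α := sub_ne_zero.1 (abs_pos.1 hx0)
  have hxs : x ∈ s := ⟨hfx, hfy, hxα⟩
  have hb := hδ (show dist x α < δ by rwa [Real.dist_eq]) hxs
  simp only [Real.norm_eq_abs, abs_pow] at hb
  calc |Φ x - α| ≤ C * |x - α| ^ 7 := hb
    _ ≤ max C 1 * |x - α| ^ 7 :=
      mul_le_mul_of_nonneg_right (le_max_left _ _) (by positivity)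
end

section
/- Let f : ℝ → ℝ be C^∞ on an open set containing α, with f(α) = 0 and f'(α) ≠ 0. Let A : ℝ → ℝ be C^∞ with A(0) = 1 and A'(0) = 2. For x near α define y(x) = x − f(x)/f'(x), z(x) = y(x) − A(f(y(x))/f(x))·f(y(x))/f'(x), and Φ(x) = z(x) − f(z(x)) / ( f[z,y] + f[z,x,x]·(z(x) − y(x)) ), where f[z,y] = (f(z) − f(y))/(z − y), f[z,x] = (f(z) − f(x))/(z − x) and f[z,x,x] = (f[z,x] − f'(x))/(z − x). Then there exist δ > 0 and C > 0 such that for every x with 0 < |x − α| < δ at which f(x) ≠ 0, z(x) ≠ y(x), z(x) ≠ x, and the denominator f[z,y] + f[z,x,x]·(z − y) is nonzero, one has |Φ(x) − α| ≤ C·|x − α|^7 (local convergence order at least seven). -/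
open Topology Filter Asymptotics

open Set

private lemma abs_mul_le' {a b A B : ℝ} (ha : |a| ≤ A) (hb : |b| ≤ B) : |a * b| ≤ A * B := by
  rw [abs_mul]
  exact mul_le_mul ha hb (abs_nonneg _) ((abs_nonneg a).trans ha)

private lemma abs_div_le' {a b A c : ℝ} (ha : |a| ≤ A) (hb : c ≤ |b|) (hc : 0 < c) :
    |a / b| ≤ A / c := by
  rw [abs_div]
  exact div_le_div₀ ((abs_nonneg a).trans ha) ha hc hb

private lemma mem_uIcc_abs {u v t : ℝ} (ht : t ∈ Set.uIcc v u) : |t - v| ≤ |u - v| := by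
  rcases le_total v u with h | h
  · rw [Set.uIcc_of_le h] at ht
    rw [abs_of_nonneg (by linarith [ht.1]), abs_of_nonneg (by linarith)]
    linarith [ht.2]
  · rw [Set.uIcc_of_ge h] at ht
    rw [abs_of_nonpos (by linarith [ht.2]), abs_of_nonpos (by linarith)]
    linarith [ht.1]

private lemma lip_of_deriv {g g' : ℝ → ℝ} {s : Set ℝ} (hconv : Convex ℝ s)
    (hder : ∀ t ∈ s, HasDerivAt g (g' t) t) {C : ℝ}
    (hC : ∀ t ∈ s, |g' t| ≤ C) {u v : ℝ} (hu : u ∈ s) (hv : v ∈ s) :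
    |g u - g v| ≤ C * |u - v| := by
  have := hconv.norm_image_sub_le_of_norm_hasDerivWithin_le
    (fun t ht => (hder t ht).hasDerivWithinAt) (fun t ht => by simpa using hC t ht) hv hu
  simpa [Real.norm_eq_abs] using this

private lemma tay1' {g g' : ℝ → ℝ} {s : Set ℝ} (hconv : Convex ℝ s)
    (hder : ∀ t ∈ s, HasDerivAt g (g' t) t) {L : ℝ} (hL0 : 0 ≤ L)
    (hL : ∀ t ∈ s, ∀ t' ∈ s, |g' t - g' t'| ≤ L * |t - t'|) {u v : ℝ}
    (hu : u ∈ s) (hv : v ∈ s) :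
    |g u - g v - g' v * (u - v)| ≤ L * |u - v| * |u - v| := by
  have hsub : Set.uIcc v u ⊆ s := hconv.ordConnected.uIcc_subset hv hu
  have hderφ : ∀ t ∈ Set.uIcc v u,
      HasDerivWithinAt (fun t => g t - g' v * t) (g' t - g' v) (Set.uIcc v u) t := by
    intro t ht
    have : HasDerivAt (fun t => g t - g' v * t) (g' t - g' v) t := by
      exact ((hder t (hsub ht)).sub ((hasDerivAt_id t).const_mul (g' v))).congr_deriv (by ring)
    exact this.hasDerivWithinAt
  have hbound : ∀ t ∈ Set.uIcc v u, ‖g' t - g' v‖ ≤ L * |u - v| := by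
    intro t ht
    calc ‖g' t - g' v‖ = |g' t - g' v| := rfl
    _ ≤ L * |t - v| := hL t (hsub ht) v hv
    _ ≤ L * |u - v| := by
        have := mem_uIcc_abs ht
        nlinarith [abs_nonneg (t - v)]
  have := (convex_uIcc v u).norm_image_sub_le_of_norm_hasDerivWithin_le hderφ hbound
    (Set.left_mem_uIcc) (Set.right_mem_uIcc)
  have h2 : (g u - g' v * u) - (g v - g' v * v) = g u - g v - g' v * (u - v) := by ring
  rw [Real.norm_eq_abs, Real.norm_eq_abs, h2] at this
  exact this

private lemma tay2' {g g' g'' : ℝ → ℝ} {s : Set ℝ} (hconv : Convex ℝ s)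
    (hder : ∀ t ∈ s, HasDerivAt g (g' t) t) (hder' : ∀ t ∈ s, HasDerivAt g' (g'' t) t)
    {L : ℝ} (hL0 : 0 ≤ L)
    (hL : ∀ t ∈ s, ∀ t' ∈ s, |g'' t - g'' t'| ≤ L * |t - t'|) {u v : ℝ}
    (hu : u ∈ s) (hv : v ∈ s) :
    |g u - g v - g' v * (u - v) - g'' v / 2 * (u - v) ^ 2| ≤ L * |u - v| ^ 3 := by
  have hsub : Set.uIcc v u ⊆ s := hconv.ordConnected.uIcc_subset hv hu
  have hderφ : ∀ t ∈ Set.uIcc v u,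
      HasDerivWithinAt (fun t => g t - g' v * t - g'' v / 2 * (t - v) ^ 2)
        (g' t - g' v - g'' v * (t - v)) (Set.uIcc v u) t := by
    intro t ht
    have h1 : HasDerivAt (fun t : ℝ => g t - g' v * t - g'' v / 2 * (t - v) ^ 2)
        (g' t - g' v * 1 - g'' v / 2 * (2 * (t - v) ^ 1 * 1)) t := by
      exact ((hder t (hsub ht)).sub ((hasDerivAt_id t).const_mul (g' v))).sub
        ((((hasDerivAt_id t).sub_const v).pow 2).const_mul (g'' v / 2))
    have h2 : g' t - g' v * 1 - g'' v / 2 * (2 * (t - v) ^ 1 * 1)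
        = g' t - g' v - g'' v * (t - v) := by ring
    rw [h2] at h1
    exact h1.hasDerivWithinAt
  have hbound : ∀ t ∈ Set.uIcc v u, ‖g' t - g' v - g'' v * (t - v)‖ ≤ L * |u - v| ^ 2 := by
    intro t ht
    calc ‖g' t - g' v - g'' v * (t - v)‖ = |g' t - g' v - g'' v * (t - v)| := rfl
    _ ≤ L * |t - v| * |t - v| := tay1' hconv hder' hL0 hL (hsub ht) hv
    _ ≤ L * |u - v| ^ 2 := by
        have h3 := mem_uIcc_abs ht
        have h4 : |t - v| * |t - v| ≤ |u - v| * |u - v| :=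
          mul_le_mul h3 h3 (abs_nonneg _) (abs_nonneg _)
        calc L * |t - v| * |t - v| = L * (|t - v| * |t - v|) := by ring
        _ ≤ L * (|u - v| * |u - v|) := by
            exact mul_le_mul_of_nonneg_left h4 hL0
        _ = L * |u - v| ^ 2 := by ring
  have := (convex_uIcc v u).norm_image_sub_le_of_norm_hasDerivWithin_le hderφ hbound
    (Set.left_mem_uIcc) (Set.right_mem_uIcc)
  have h2 : (g u - g' v * u - g'' v / 2 * (u - v) ^ 2) - (g v - g' v * v - g'' v / 2 * (v - v) ^ 2)
      = g u - g v - g' v * (u - v) - g'' v / 2 * (u - v) ^ 2 := by ring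
  rw [Real.norm_eq_abs, Real.norm_eq_abs, h2] at this
  calc |g u - g v - g' v * (u - v) - g'' v / 2 * (u - v) ^ 2| ≤ L * |u - v| ^ 2 * |u - v| := this
  _ = L * |u - v| ^ 3 := by ring

/-- Mean value theorem for the second divided difference with a doubled node:
`(g a - g b - g1 b (a-b))/(a-b)² = g2 ξ / 2`. -/
private lemma dd2r_mvt {g g1 g2 : ℝ → ℝ} {p q a b : ℝ}
    (hder : ∀ t ∈ Set.Icc p q, HasDerivAt g (g1 t) t)
    (hder' : ∀ t ∈ Set.Icc p q, HasDerivAt g1 (g2 t) t)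
    (ha : a ∈ Set.Icc p q) (hb : b ∈ Set.Icc p q) (hab : a ≠ b) :
    ∃ ξ ∈ Set.Icc p q, g a - g b - g1 b * (a - b) = g2 ξ / 2 * (a - b) ^ 2 := by
  have hab2 : (a - b) ^ 2 ≠ 0 := pow_ne_zero _ (sub_ne_zero.mpr hab)
  set Δ : ℝ := (g a - g b - g1 b * (a - b)) / (a - b) ^ 2 with hΔ
  have key : g a - g b - g1 b * (a - b) = Δ * (a - b) ^ 2 := by
    rw [hΔ]; field_simp
  set h : ℝ → ℝ := fun t => g t - g b - g1 b * (t - b) - Δ * (t - b) ^ 2 with hh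
  set h' : ℝ → ℝ := fun t => g1 t - g1 b - Δ * (2 * (t - b)) with hh'
  have hderh : ∀ t ∈ Set.Icc p q, HasDerivAt h (h' t) t := by
    intro t ht
    rw [hh, hh']
    have h1 := (((hder t ht).sub_const (g b)).sub
        ((((hasDerivAt_id t).sub_const b)).const_mul (g1 b))).sub
        ((((hasDerivAt_id t).sub_const b).pow 2).const_mul Δ)
    simp only [id_eq] at h1
    exact h1.congr_deriv (by beta_reduce; push_cast; ring)
  have hderh' : ∀ t ∈ Set.Icc p q, HasDerivAt h' (g2 t - Δ * 2) t := by
    intro t ht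
    rw [hh']
    have h1 := ((hder' t ht).sub_const (g1 b)).sub
        ((((hasDerivAt_id t).sub_const b)).const_mul 2 |>.const_mul Δ)
    simp only [id_eq] at h1
    exact h1.congr_deriv (by beta_reduce; push_cast; ring)
  have hha : h a = 0 := by simp only [hh]; rw [key]; ring
  have hhb : h b = 0 := by simp only [hh]; ring
  have hh'b : h' b = 0 := by simp only [hh']; ring
  rcases lt_or_gt_of_ne hab with hlt | hlt
  · -- a < b
    have hIab : Set.Icc a b ⊆ Set.Icc p q := Set.Icc_subset_Icc ha.1 hb.2
    obtain ⟨η, hη, hη0⟩ := exists_hasDerivAt_eq_zero hlt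
      (fun t ht => ((hderh t (hIab ht)).continuousAt).continuousWithinAt)
      (hha.trans hhb.symm)
      (fun t ht => hderh t (hIab (Set.Ioo_subset_Icc_self ht)))
    have hIηb : Set.Icc η b ⊆ Set.Icc p q :=
      Set.Icc_subset_Icc (ha.1.trans hη.1.le) hb.2
    obtain ⟨ξ, hξ, hξ0⟩ := exists_hasDerivAt_eq_zero hη.2
      (fun t ht => ((hderh' t (hIηb ht)).continuousAt).continuousWithinAt)
      (hη0.trans hh'b.symm)
      (fun t ht => hderh' t (hIηb (Set.Ioo_subset_Icc_self ht)))
    refine ⟨ξ, ⟨(ha.1.trans hη.1.le).trans hξ.1.le, (hξ.2.le.trans hb.2)⟩, ?_⟩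
    have : Δ = g2 ξ / 2 := by linarith [hξ0]
    rw [key, this]
  · -- b < a
    have hIba : Set.Icc b a ⊆ Set.Icc p q := Set.Icc_subset_Icc hb.1 ha.2
    obtain ⟨η, hη, hη0⟩ := exists_hasDerivAt_eq_zero hlt
      (fun t ht => ((hderh t (hIba ht)).continuousAt).continuousWithinAt)
      (hhb.trans hha.symm)
      (fun t ht => hderh t (hIba (Set.Ioo_subset_Icc_self ht)))
    have hIbη : Set.Icc b η ⊆ Set.Icc p q :=
      Set.Icc_subset_Icc hb.1 (hη.2.le.trans ha.2)
    obtain ⟨ξ, hξ, hξ0⟩ := exists_hasDerivAt_eq_zero hη.1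
      (fun t ht => ((hderh' t (hIbη ht)).continuousAt).continuousWithinAt)
      (hh'b.trans hη0.symm)
      (fun t ht => hderh' t (hIbη (Set.Ioo_subset_Icc_self ht)))
    refine ⟨ξ, ⟨hb.1.trans hξ.1.le, (hξ.2.le.trans (hη.2.le.trans ha.2))⟩, ?_⟩
    have : Δ = g2 ξ / 2 := by linarith [hξ0]
    rw [key, this]

/-- Mean value theorem for second divided differences, sorted case. -/
private lemma dd2_core {g g1 g2 : ℝ → ℝ} {p q x₁ x₂ x₃ : ℝ}
    (hder : ∀ t ∈ Set.Icc p q, HasDerivAt g (g1 t) t)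
    (hder' : ∀ t ∈ Set.Icc p q, HasDerivAt g1 (g2 t) t)
    (h1 : x₁ ∈ Set.Icc p q) (h3 : x₃ ∈ Set.Icc p q)
    (h12 : x₁ < x₂) (h23 : x₂ < x₃) :
    ∃ ξ ∈ Set.Icc p q, g2 ξ = 2 * (g x₁ / ((x₁ - x₂) * (x₁ - x₃)) +
      g x₂ / ((x₂ - x₁) * (x₂ - x₃)) + g x₃ / ((x₃ - x₁) * (x₃ - x₂))) := by
  have d12 : x₁ - x₂ ≠ 0 := by intro h; nlinarith [h]
  have d13 : x₁ - x₃ ≠ 0 := by intro h; nlinarith [h]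
  have d23 : x₂ - x₃ ≠ 0 := by intro h; nlinarith [h]
  have d21 : x₂ - x₁ ≠ 0 := by intro h; nlinarith [h]
  have d31 : x₃ - x₁ ≠ 0 := by intro h; nlinarith [h]
  have d32 : x₃ - x₂ ≠ 0 := by intro h; nlinarith [h]
  set E : ℝ := g x₁ / ((x₁ - x₂) * (x₁ - x₃)) + g x₂ / ((x₂ - x₁) * (x₂ - x₃))
      + g x₃ / ((x₃ - x₁) * (x₃ - x₂)) with hE
  set sl : ℝ := (g x₁ - g x₂) / (x₁ - x₂) with hsl
  set h : ℝ → ℝ := fun t => g t - g x₁ - sl * (t - x₁) - E * ((t - x₁) * (t - x₂)) with hh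
  set h' : ℝ → ℝ := fun t => g1 t - sl - E * (2 * t - x₁ - x₂) with hh'
  have hderh : ∀ t ∈ Set.Icc p q, HasDerivAt h (h' t) t := by
    intro t ht
    rw [hh, hh']
    have ha := (((hder t ht).sub_const (g x₁)).sub
        ((((hasDerivAt_id t).sub_const x₁)).const_mul sl)).sub
        ((((hasDerivAt_id t).sub_const x₁).mul ((hasDerivAt_id t).sub_const x₂)).const_mul E)
    simp only [id_eq] at ha
    exact ha.congr_deriv (by beta_reduce; ring)
  have hderh' : ∀ t ∈ Set.Icc p q, HasDerivAt h' (g2 t - E * 2) t := by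
    intro t ht
    rw [hh']
    have ha := ((hder' t ht).sub_const sl).sub
        (((((hasDerivAt_id t).const_mul (2:ℝ)).sub_const x₁).sub_const x₂).const_mul E)
    simp only [id_eq] at ha
    exact ha.congr_deriv (by beta_reduce; ring)
  have hh1 : h x₁ = 0 := by simp only [hh]; ring
  have hh2 : h x₂ = 0 := by simp only [hh, hsl]; field_simp; ring
  have hh3 : h x₃ = 0 := by
    simp only [hh, hsl, hE]; field_simp; ring
  have hsub12 : Set.Icc x₁ x₂ ⊆ Set.Icc p q :=
    Set.Icc_subset_Icc h1.1 (by linarith [h3.2])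
  have hsub23 : Set.Icc x₂ x₃ ⊆ Set.Icc p q :=
    Set.Icc_subset_Icc (by linarith [h1.1]) h3.2
  obtain ⟨η₁, hη₁, hη₁0⟩ := exists_hasDerivAt_eq_zero h12
    (fun t ht => ((hderh t (hsub12 ht)).continuousAt).continuousWithinAt)
    (hh1.trans hh2.symm)
    (fun t ht => hderh t (hsub12 (Set.Ioo_subset_Icc_self ht)))
  obtain ⟨η₂, hη₂, hη₂0⟩ := exists_hasDerivAt_eq_zero h23
    (fun t ht => ((hderh t (hsub23 ht)).continuousAt).continuousWithinAt)
    (hh2.trans hh3.symm)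
    (fun t ht => hderh t (hsub23 (Set.Ioo_subset_Icc_self ht)))
  have hηsub : Set.Icc η₁ η₂ ⊆ Set.Icc p q :=
    Set.Icc_subset_Icc (by linarith [h1.1, hη₁.1]) (by linarith [h3.2, hη₂.2])
  obtain ⟨ξ, hξ, hξ0⟩ := exists_hasDerivAt_eq_zero (by linarith [hη₁.2, hη₂.1] : η₁ < η₂)
    (fun t ht => ((hderh' t (hηsub ht)).continuousAt).continuousWithinAt)
    (hη₁0.trans hη₂0.symm)
    (fun t ht => hderh' t (hηsub (Set.Ioo_subset_Icc_self ht)))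
  refine ⟨ξ, hηsub (Set.Ioo_subset_Icc_self hξ), by linarith [hξ0]⟩

/-- Mean value theorem for second divided differences (three distinct nodes):
`f[a,b] - f[a,c] = (g2 ξ / 2) (b - c)`. -/
private lemma dd2_mvt {g g1 g2 : ℝ → ℝ} {p q a b c : ℝ}
    (hder : ∀ t ∈ Set.Icc p q, HasDerivAt g (g1 t) t)
    (hder' : ∀ t ∈ Set.Icc p q, HasDerivAt g1 (g2 t) t)
    (ha : a ∈ Set.Icc p q) (hb : b ∈ Set.Icc p q) (hc : c ∈ Set.Icc p q)
    (hab : a ≠ b) (hac : a ≠ c) (hbc : b ≠ c) :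
    ∃ ξ ∈ Set.Icc p q,
      (g a - g b) / (a - b) - (g a - g c) / (a - c) = g2 ξ / 2 * (b - c) := by
  have dab : a - b ≠ 0 := sub_ne_zero.mpr hab
  have dac : a - c ≠ 0 := sub_ne_zero.mpr hac
  have dbc : b - c ≠ 0 := sub_ne_zero.mpr hbc
  have dba : b - a ≠ 0 := sub_ne_zero.mpr hab.symm
  have dca : c - a ≠ 0 := sub_ne_zero.mpr hac.symm
  have dcb : c - b ≠ 0 := sub_ne_zero.mpr hbc.symm
  have key : ∀ ξ : ℝ, g2 ξ = 2 * (g a / ((a - b) * (a - c)) +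
      g b / ((b - a) * (b - c)) + g c / ((c - a) * (c - b))) →
      (g a - g b) / (a - b) - (g a - g c) / (a - c) = g2 ξ / 2 * (b - c) := by
    intro ξ hξ
    rw [hξ]
    field_simp
    ring
  -- case analysis on the ordering of a, b, c
  rcases lt_trichotomy a b with h1 | h1 | h1
  · rcases lt_trichotomy b c with h2 | h2 | h2
    · -- a < b < c
      obtain ⟨ξ, hξI, hξ⟩ := dd2_core hder hder' ha hc h1 h2
      exact ⟨ξ, hξI, key ξ (by rw [hξ]; try ring)⟩
    · exact absurd h2 hbc
    · rcases lt_trichotomy a c with h3 | h3 | h3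
      · -- a < c < b
        obtain ⟨ξ, hξI, hξ⟩ := dd2_core hder hder' ha hb h3 h2
        exact ⟨ξ, hξI, key ξ (by rw [hξ]; try ring)⟩
      · exact absurd h3 hac
      · -- c < a < b
        obtain ⟨ξ, hξI, hξ⟩ := dd2_core hder hder' hc hb h3 h1
        exact ⟨ξ, hξI, key ξ (by rw [hξ]; try ring)⟩
  · exact absurd h1 hab
  · rcases lt_trichotomy a c with h2 | h2 | h2
    · -- b < a < c
      obtain ⟨ξ, hξI, hξ⟩ := dd2_core hder hder' hb hc h1 h2
      exact ⟨ξ, hξI, key ξ (by rw [hξ]; try ring)⟩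
    · exact absurd h2 hac
    · rcases lt_trichotomy b c with h3 | h3 | h3
      · -- b < c < a
        obtain ⟨ξ, hξI, hξ⟩ := dd2_core hder hder' hb ha h3 h2
        exact ⟨ξ, hξI, key ξ (by rw [hξ]; try ring)⟩
      · exact absurd h3 hbc
      · -- c < b < a
        obtain ⟨ξ, hξI, hξ⟩ := dd2_core hder hder' hc ha h3 h1
        exact ⟨ξ, hξI, key ξ (by rw [hξ]; try ring)⟩

set_option maxHeartbeats 4000000 in
/-- Theorem 2 (seventh order part) for scheme (FD2):
if additionally `A'(0) = 2`, the scheme has local convergence order at least seven. -/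
theorem fd2_order_seven
    (f A : ℝ → ℝ) (α : ℝ)
    (U : Set ℝ) (hU : IsOpen U) (hαU : α ∈ U)
    (hf : ContDiffOn ℝ (⊤ : ℕ∞) f U)
    (hroot : f α = 0) (hf'α : deriv f α ≠ 0)
    (hA : ContDiff ℝ (⊤ : ℕ∞) A) (hA0 : A 0 = 1) (hA1 : deriv A 0 = 2)
    (y z D Φ : ℝ → ℝ)
    (hy : ∀ x, y x = x - f x / deriv f x)
    (hz : ∀ x, z x = y x - A (f (y x) / f x) * (f (y x) / deriv f x))
    (hD : ∀ x, D x = (f (z x) - f (y x)) / (z x - y x) +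
      ((f (z x) - f x) / (z x - x) - deriv f x) / (z x - x) * (z x - y x))
    (hΦ : ∀ x, Φ x = z x - f (z x) / D x) :
    ∃ δ > 0, ∃ C > 0, ∀ x : ℝ, 0 < |x - α| → |x - α| < δ →
      f x ≠ 0 → z x ≠ y x → z x ≠ x → D x ≠ 0 →
      |Φ x - α| ≤ C * |x - α| ^ 7 := by
  set f1 := deriv f with hf1def
  set f2 := deriv f1 with hf2def
  set f3 := deriv f2 with hf3def
  set A1 := deriv A with hA1def
  set A2 := deriv A1 with hA2def
  -- a compact interval around α inside U
  obtain ⟨ε, hε0, hεU⟩ := Metric.isOpen_iff.1 hU α hαU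
  set r := ε / 2 with hrdef
  have hr0 : 0 < r := by positivity
  set J := Set.Icc (α - r) (α + r) with hJdef
  have hJU : J ⊆ U := by
    intro t ht
    apply hεU
    rw [Metric.mem_ball, Real.dist_eq]
    have h1 := ht.1; have h2 := ht.2
    rw [abs_lt]
    constructor <;> simp only [hrdef] at h1 h2 <;> linarith
  have hmemJ : ∀ t : ℝ, |t - α| ≤ r → t ∈ J := by
    intro t ht
    have := abs_le.mp ht
    exact ⟨by linarith [this.1], by linarith [this.2]⟩
  have hαJ : α ∈ J := hmemJ α (by simpa using hr0.le)
  have hJconv : Convex ℝ J := convex_Icc _ _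
  -- smoothness downgrades
  have hfC3 : ContDiffOn ℝ 3 f U := hf.of_le (WithTop.coe_le_coe.mpr (le_top : (3:ℕ∞) ≤ ⊤))
  have hf1C : ContDiffOn ℝ 2 f1 U := hf.deriv_of_isOpen hU (WithTop.coe_le_coe.mpr le_top)
  have hf2C : ContDiffOn ℝ 1 f2 U := hf1C.deriv_of_isOpen hU (by norm_num)
  have hf3cont : ContinuousOn f3 U := hf2C.continuousOn_deriv_of_isOpen hU le_rfl
  -- derivative facts
  have hdf : ∀ t ∈ U, HasDerivAt f (f1 t) t := fun t ht =>
    ((hfC3.differentiableOn (by norm_num)).differentiableAt (hU.mem_nhds ht)).hasDerivAt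
  have hdf1 : ∀ t ∈ U, HasDerivAt f1 (f2 t) t := fun t ht =>
    ((hf1C.differentiableOn (by norm_num)).differentiableAt (hU.mem_nhds ht)).hasDerivAt
  have hdf2 : ∀ t ∈ U, HasDerivAt f2 (f3 t) t := fun t ht =>
    ((hf2C.differentiableOn one_ne_zero).differentiableAt (hU.mem_nhds ht)).hasDerivAt
  -- A derivatives
  have hA3 : ContDiff ℝ 3 A := hA.of_le (WithTop.coe_le_coe.mpr (le_top : (3:ℕ∞) ≤ ⊤))
  have hA1C : ContDiff ℝ 2 A1 := (contDiff_succ_iff_deriv.mp (hA.of_le (WithTop.coe_le_coe.mpr le_top) : ContDiff ℝ (2+1) A)).2.2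
  have hA2C : ContDiff ℝ 1 A2 := (contDiff_succ_iff_deriv.mp (hA1C.of_le le_rfl : ContDiff ℝ (1+1) A1)).2.2
  have hdA : ∀ t : ℝ, HasDerivAt A (A1 t) t := fun t =>
    ((hA3.differentiable (by norm_num)) t).hasDerivAt
  have hdA1 : ∀ t : ℝ, HasDerivAt A1 (A2 t) t := fun t =>
    ((hA1C.differentiable (by norm_num)) t).hasDerivAt
  -- bounds
  obtain ⟨B1, hB1⟩ := isCompact_Icc.exists_bound_of_continuousOn (hf1C.continuousOn.mono hJU)
  obtain ⟨B2, hB2⟩ := isCompact_Icc.exists_bound_of_continuousOn (hf2C.continuousOn.mono hJU)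
  obtain ⟨B3, hB3⟩ := isCompact_Icc.exists_bound_of_continuousOn (hf3cont.mono hJU)
  obtain ⟨BA1, hBA1⟩ := (isCompact_Icc : IsCompact (Set.Icc (-1:ℝ) 1)).exists_bound_of_continuousOn
    (hA1C.continuous.continuousOn)
  obtain ⟨BA2, hBA2⟩ := (isCompact_Icc : IsCompact (Set.Icc (-1:ℝ) 1)).exists_bound_of_continuousOn
    (hA2C.continuous.continuousOn)
  set M := max 1 (max B1 (max B2 (max B3 (max BA1 BA2)))) with hMdef
  have hM1 : (1:ℝ) ≤ M := le_max_left _ _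
  have hM0 : (0:ℝ) < M := lt_of_lt_of_le one_pos hM1
  have hB1M : B1 ≤ M := le_trans (le_max_left _ _) (le_max_right _ _)
  have hB2M : B2 ≤ M := le_trans (le_trans (le_max_left _ _) (le_max_right _ _)) (le_max_right _ _)
  have hB3M : B3 ≤ M := le_trans (le_trans (le_trans (le_max_left _ _) (le_max_right _ _))
    (le_max_right _ _)) (le_max_right _ _)
  have hBA1M : BA1 ≤ M := le_trans (le_trans (le_trans (le_trans (le_max_left _ _)
    (le_max_right _ _)) (le_max_right _ _)) (le_max_right _ _)) (le_max_right _ _)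
  have hBA2M : BA2 ≤ M := le_trans (le_trans (le_trans (le_trans (le_max_right _ _)
    (le_max_right _ _)) (le_max_right _ _)) (le_max_right _ _)) (le_max_right _ _)
  have hMf1 : ∀ t ∈ J, |f1 t| ≤ M := fun t ht => le_trans (hB1 t ht) hB1M
  have hMf2 : ∀ t ∈ J, |f2 t| ≤ M := fun t ht => le_trans (hB2 t ht) hB2M
  have hMf3 : ∀ t ∈ J, |f3 t| ≤ M := fun t ht => le_trans (hB3 t ht) hB3M
  have hMA1 : ∀ t ∈ Set.Icc (-1:ℝ) 1, |A1 t| ≤ M := fun t ht => le_trans (hBA1 t ht) hBA1M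
  have hMA2 : ∀ t ∈ Set.Icc (-1:ℝ) 1, |A2 t| ≤ M := fun t ht => le_trans (hBA2 t ht) hBA2M
  -- derivative facts restricted to J
  have hderJ : ∀ t ∈ J, HasDerivAt f (f1 t) t := fun t ht => hdf t (hJU ht)
  have hderJ1 : ∀ t ∈ J, HasDerivAt f1 (f2 t) t := fun t ht => hdf1 t (hJU ht)
  have hderJ2 : ∀ t ∈ J, HasDerivAt f2 (f3 t) t := fun t ht => hdf2 t (hJU ht)
  -- Lipschitz bounds on J
  have hlipf : ∀ u ∈ J, ∀ v ∈ J, |f u - f v| ≤ M * |u - v| := fun u hu v hv =>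
    lip_of_deriv hJconv hderJ hMf1 hu hv
  have hlipf1 : ∀ u ∈ J, ∀ v ∈ J, |f1 u - f1 v| ≤ M * |u - v| := fun u hu v hv =>
    lip_of_deriv hJconv hderJ1 hMf2 hu hv
  have hlipf2 : ∀ u ∈ J, ∀ v ∈ J, |f2 u - f2 v| ≤ M * |u - v| := fun u hu v hv =>
    lip_of_deriv hJconv hderJ2 hMf3 hu hv
  -- Taylor bounds on J
  have htay1f : ∀ u ∈ J, ∀ v ∈ J, |f u - f v - f1 v * (u - v)| ≤ M * |u - v| * |u - v| :=
    fun u hu v hv => tay1' hJconv hderJ hM0.le hlipf1 hu hv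
  have htay1f1 : ∀ u ∈ J, ∀ v ∈ J, |f1 u - f1 v - f2 v * (u - v)| ≤ M * |u - v| * |u - v| :=
    fun u hu v hv => tay1' hJconv hderJ1 hM0.le hlipf2 hu hv
  have htay2f : ∀ u ∈ J, ∀ v ∈ J,
      |f u - f v - f1 v * (u - v) - f2 v / 2 * (u - v) ^ 2| ≤ M * |u - v| ^ 3 :=
    fun u hu v hv => tay2' hJconv hderJ hderJ1 hM0.le hlipf2 hu hv
  -- A bounds
  have hlipA : ∀ t : ℝ, |t| ≤ 1 → |A t - 1| ≤ M * |t| := by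
    intro t ht
    have h0 : (0:ℝ) ∈ Set.Icc (-1:ℝ) 1 := by constructor <;> norm_num
    have := lip_of_deriv (convex_Icc (-1:ℝ) 1) (fun u _ => hdA u) hMA1 (abs_le.mp ht) h0
    simpa [hA0] using this
  have htayA : ∀ t : ℝ, |t| ≤ 1 → |A t - 1 - 2 * t| ≤ M * |t| * |t| := by
    intro t ht
    have h0 : (0:ℝ) ∈ Set.Icc (-1:ℝ) 1 := by constructor <;> norm_num
    have hlipA1 : ∀ u ∈ Set.Icc (-1:ℝ) 1, ∀ v ∈ Set.Icc (-1:ℝ) 1,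
        |A1 u - A1 v| ≤ M * |u - v| := fun u hu v hv =>
      lip_of_deriv (convex_Icc (-1:ℝ) 1) (fun w _ => hdA1 w) hMA2 hu hv
    have := tay1' (convex_Icc (-1:ℝ) 1) (fun u _ => hdA u) hM0.le hlipA1 (abs_le.mp ht) h0
    have hA10 : A1 0 = 2 := hA1
    simpa [hA0, hA10] using this
  clear_value f1 f2 f3 A1 A2
  -- the root is simple
  set m := |f1 α| with hmdef
  have hm0 : 0 < m := abs_pos.mpr hf'α
  have hmM : m ≤ M := hMf1 α hαJ
  -- constants
  set K1 : ℝ := 2 * M / m with hK1def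
  set Kt : ℝ := 2 * M * K1 / m with hKtdef
  set Kc : ℝ := K1 + 4 * M ^ 2 * K1 / m with hKcdef
  set c1 : ℝ := M * K1 ^ 2 + M * K1 ^ 3 with hc1def
  set K7 : ℝ := 12 * M ^ 3 / m + 2 * M * c1 with hK7def
  set K6 : ℝ := 2 * K7 / m with hK6def
  set K5 : ℝ := M + K6 + M ^ 2 * Kt ^ 2 with hK5def
  set K8 : ℝ := 2 * M * K5 / m + 2 * M * c1 with hK8def
  set Kz : ℝ := 2 * K8 / m with hKzdef
  set K9 : ℝ := M * Kz + M * (Kc + K1) with hK9def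
  set C : ℝ := 2 * Kz * K9 / m + 1 with hCdef
  clear_value M m
  have hK10 : 0 < K1 := by rw [hK1def]; exact div_pos (by linarith) hm0
  have hKt0 : 0 < Kt := by
    rw [hKtdef]; exact div_pos (mul_pos (mul_pos two_pos hM0) hK10) hm0
  have hKc0 : 0 < Kc := by
    rw [hKcdef]
    have : 0 < 4 * M ^ 2 * K1 / m :=
      div_pos (mul_pos (mul_pos (by norm_num) (pow_pos hM0 2)) hK10) hm0
    linarith
  have hc10 : 0 < c1 := by
    rw [hc1def]; exact add_pos (mul_pos hM0 (pow_pos hK10 2)) (mul_pos hM0 (pow_pos hK10 3))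
  have hK70 : 0 < K7 := by
    rw [hK7def]
    exact add_pos (div_pos (mul_pos (by norm_num) (pow_pos hM0 3)) hm0)
      (mul_pos (mul_pos two_pos hM0) hc10)
  have hK60 : 0 < K6 := by rw [hK6def]; exact div_pos (by linarith) hm0
  have hK50 : 0 < K5 := by
    rw [hK5def]; exact add_pos (add_pos hM0 hK60) (mul_pos (pow_pos hM0 2) (pow_pos hKt0 2))
  have hK80 : 0 < K8 := by
    rw [hK8def]
    exact add_pos (div_pos (mul_pos (mul_pos two_pos hM0) hK50) hm0)
      (mul_pos (mul_pos two_pos hM0) hc10)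
  have hKz0 : 0 < Kz := by rw [hKzdef]; exact div_pos (by linarith) hm0
  have hK90 : 0 < K9 := by
    rw [hK9def]; exact add_pos (mul_pos hM0 hKz0) (mul_pos hM0 (add_pos hKc0 hK10))
  have hC0 : 0 < C := by
    rw [hCdef]
    exact add_pos (div_pos (mul_pos (mul_pos two_pos hKz0) hK90) hm0) one_pos
  set δ : ℝ := min r (min 1 (min (m / (2 * M)) (min (1 / K1) (min (1 / Kt)
    (min (1 / Kc) (min (m / (4 * M * Kc)) (m / (4 * K9)))))))) with hδdef
  have hδ0 : 0 < δ := by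
    refine lt_min hr0 (lt_min one_pos (lt_min (div_pos hm0 (by linarith))
      (lt_min (div_pos one_pos hK10) (lt_min (div_pos one_pos hKt0)
      (lt_min (div_pos one_pos hKc0) (lt_min (div_pos hm0 (mul_pos (mul_pos (by norm_num) hM0) hKc0))
      (div_pos hm0 (mul_pos (by norm_num) hK90))))))))
  clear_value K1 Kt Kc c1 K7 K6 K5 K8 Kz K9 C δ
  refine ⟨δ, hδ0, C, hC0, ?_⟩
  intro x hx0 hxδ hfx hzy hzx hD0
  -- δ constraints
  have hδr : δ ≤ r := by rw [hδdef]; exact min_le_left _ _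
  have hδ1 : δ ≤ 1 := by rw [hδdef]; exact le_trans (min_le_right _ _) (min_le_left _ _)
  have hδm : δ ≤ m / (2 * M) := by
    rw [hδdef]
    exact le_trans (min_le_right _ _) (le_trans (min_le_right _ _) (min_le_left _ _))
  have hδK1 : δ ≤ 1 / K1 := by
    rw [hδdef]
    exact le_trans (min_le_right _ _) (le_trans (min_le_right _ _)
      (le_trans (min_le_right _ _) (min_le_left _ _)))
  have hδKt : δ ≤ 1 / Kt := by
    rw [hδdef]
    exact le_trans (min_le_right _ _) (le_trans (min_le_right _ _)
      (le_trans (min_le_right _ _) (le_trans (min_le_right _ _) (min_le_left _ _))))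
  have hδKc : δ ≤ 1 / Kc := by
    rw [hδdef]
    exact le_trans (min_le_right _ _) (le_trans (min_le_right _ _)
      (le_trans (min_le_right _ _) (le_trans (min_le_right _ _)
      (le_trans (min_le_right _ _) (min_le_left _ _)))))
  have hδKc2 : δ ≤ m / (4 * M * Kc) := by
    rw [hδdef]
    exact le_trans (min_le_right _ _) (le_trans (min_le_right _ _)
      (le_trans (min_le_right _ _) (le_trans (min_le_right _ _)
      (le_trans (min_le_right _ _) (le_trans (min_le_right _ _) (min_le_left _ _))))))
  have hδK9 : δ ≤ m / (4 * K9) := by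
    rw [hδdef]
    exact le_trans (min_le_right _ _) (le_trans (min_le_right _ _)
      (le_trans (min_le_right _ _) (le_trans (min_le_right _ _)
      (le_trans (min_le_right _ _) (le_trans (min_le_right _ _) (min_le_right _ _))))))
  set E := |x - α| with hEdef
  clear_value E
  have hE0 : 0 < E := hx0
  have hEnn : 0 ≤ E := hE0.le
  have hEδ : E < δ := hxδ
  have hE1 : E ≤ 1 := le_of_lt (lt_of_lt_of_le hEδ hδ1)
  have hEr : E ≤ r := le_of_lt (lt_of_lt_of_le hEδ hδr)
  have hxJ : x ∈ J := hmemJ x (by rw [← hEdef]; exact hEr)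
  have hMEm : M * E ≤ m / 2 := by
    have h1 : E ≤ m / (2 * M) := le_of_lt (lt_of_lt_of_le hEδ hδm)
    calc M * E ≤ M * (m / (2 * M)) := mul_le_mul_of_nonneg_left h1 hM0.le
    _ = m / 2 := by field_simp
  have hK1E : K1 * E ≤ 1 := by
    have h1 : E ≤ 1 / K1 := le_of_lt (lt_of_lt_of_le hEδ hδK1)
    calc K1 * E ≤ K1 * (1 / K1) := mul_le_mul_of_nonneg_left h1 hK10.le
    _ = 1 := by field_simp
  have hKtE : Kt * E ≤ 1 := by
    have h1 : E ≤ 1 / Kt := le_of_lt (lt_of_lt_of_le hEδ hδKt)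
    calc Kt * E ≤ Kt * (1 / Kt) := mul_le_mul_of_nonneg_left h1 hKt0.le
    _ = 1 := by field_simp
  have hKcE : Kc * E ≤ 1 := by
    have h1 : E ≤ 1 / Kc := le_of_lt (lt_of_lt_of_le hEδ hδKc)
    calc Kc * E ≤ Kc * (1 / Kc) := mul_le_mul_of_nonneg_left h1 hKc0.le
    _ = 1 := by field_simp
  have hMKcE : M * Kc * E ≤ m / 4 := by
    have h1 : E ≤ m / (4 * M * Kc) := le_of_lt (lt_of_lt_of_le hEδ hδKc2)
    calc M * Kc * E ≤ M * Kc * (m / (4 * M * Kc)) :=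
      mul_le_mul_of_nonneg_left h1 (mul_pos hM0 hKc0).le
    _ = m / 4 := by field_simp
  have hK9E : K9 * E ≤ m / 4 := by
    have h1 : E ≤ m / (4 * K9) := le_of_lt (lt_of_lt_of_le hEδ hδK9)
    calc K9 * E ≤ K9 * (m / (4 * K9)) := mul_le_mul_of_nonneg_left h1 hK90.le
    _ = m / 4 := by field_simp
  -- lower bound for f1 x
  have hf1xlb : m / 2 ≤ |f1 x| := by
    have h1 := hlipf1 x hxJ α hαJ
    rw [← hEdef] at h1
    have h2 := abs_sub_abs_le_abs_sub (f1 α) (f1 x)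
    rw [abs_sub_comm] at h2
    have h3 : m = |f1 α| := hmdef
    linarith
  have hf1x0 : f1 x ≠ 0 := by
    intro h
    rw [h, abs_zero] at hf1xlb
    linarith
  -- bounds for f x
  have hfxlb : m / 2 * E ≤ |f x| := by
    have h1 := htay1f x hxJ α hαJ
    rw [hroot, ← hEdef] at h1
    have h2 : |f1 α * (x - α)| = m * E := by rw [abs_mul, ← hmdef, ← hEdef]
    have h3 := abs_sub_abs_le_abs_sub (f1 α * (x - α)) (f x)
    have h4 : M * E * E ≤ m / 2 * E := mul_le_mul_of_nonneg_right hMEm hEnn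
    -- h1 : |f x - 0 - f1 α * (x - α)| ≤ M * E * E
    have h5 : f x - 0 - f1 α * (x - α) = -(f1 α * (x - α) - f x) := by ring
    rw [h5, abs_neg] at h1
    linarith
  have hfx0 : f x ≠ 0 := hfx
  have hfxub : |f x| ≤ M * E := by
    have h1 := hlipf x hxJ α hαJ
    rw [hroot, sub_zero, ← hEdef] at h1
    exact h1
  -- the Newton numerator
  obtain ⟨N, hNdef⟩ : ∃ N : ℝ, N = (x - α) * f1 x - f x := ⟨_, rfl⟩
  have hNub : |N| ≤ M * (E * E) := by
    have h1 := htay1f α hαJ x hxJ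
    rw [hroot] at h1
    have h2 : |α - x| = E := by rw [hEdef, abs_sub_comm]
    rw [h2] at h1
    have h3 : N = 0 - f x - f1 x * (α - x) := by rw [hNdef]; ring
    rw [h3]
    linarith
  -- the Newton iterate
  obtain ⟨yy, hyydef⟩ : ∃ yy : ℝ, yy = y x := ⟨_, rfl⟩
  have hyyα : yy - α = N / f1 x := by
    rw [hyydef, hy x, hNdef]
    field_simp
    ring
  have hyub : |yy - α| ≤ K1 * (E * E) := by
    rw [hyyα]
    calc |N / f1 x| ≤ (M * (E * E)) / (m / 2) := abs_div_le' hNub hf1xlb (by linarith)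
    _ = K1 * (E * E) := by rw [hK1def]; field_simp
  have hyE : |yy - α| ≤ E := by
    calc |yy - α| ≤ K1 * (E * E) := hyub
    _ = K1 * E * E := by ring
    _ ≤ 1 * E := mul_le_mul_of_nonneg_right hK1E hEnn
    _ = E := one_mul E
  have hyJ : yy ∈ J := hmemJ yy (le_trans hyE hEr)
  have hfyub : |f yy| ≤ M * (K1 * (E * E)) := by
    have h1 := hlipf yy hyJ α hαJ
    rw [hroot, sub_zero] at h1
    exact h1.trans (mul_le_mul_of_nonneg_left hyub hM0.le)
  -- the ratio t1
  obtain ⟨t1, ht1def⟩ : ∃ t1 : ℝ, t1 = f yy / f x := ⟨_, rfl⟩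
  have ht1ub : |t1| ≤ Kt * E := by
    rw [ht1def]
    calc |f yy / f x| ≤ (M * (K1 * (E * E))) / (m / 2 * E) :=
      abs_div_le' hfyub hfxlb (by positivity)
    _ = Kt * E := by rw [hKtdef]; field_simp
  have ht1l : |t1| ≤ 1 := le_trans ht1ub hKtE
  have hAt1 : |A t1| ≤ 2 * M := by
    have h1 := hlipA t1 ht1l
    have h2 := abs_sub_abs_le_abs_sub (A t1) (1 : ℝ)
    rw [abs_one] at h2
    have h3 : M * |t1| ≤ M * 1 := mul_le_mul_of_nonneg_left ht1l hM0.le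
    linarith
  -- the second substep
  obtain ⟨zz, hzzdef⟩ : ∃ zz : ℝ, zz = z x := ⟨_, rfl⟩
  obtain ⟨Num, hNumdef⟩ : ∃ Num : ℝ, Num = N - A t1 * f yy := ⟨_, rfl⟩
  have hzzα : zz - α = Num / f1 x := by
    have h1 : zz - α = (yy - α) - A t1 * (f yy / f1 x) := by
      rw [hzzdef, hz x, ← hyydef, ← ht1def]
      ring
    rw [h1, hyyα, hNumdef]
    field_simp
  have hNumcrude : |Num| ≤ M * (E * E) + 2 * M * (M * (K1 * (E * E))) := by
    calc |Num| ≤ |N| + |A t1 * f yy| := by rw [hNumdef]; exact abs_sub _ _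
    _ ≤ M * (E * E) + 2 * M * (M * (K1 * (E * E))) :=
      add_le_add hNub (abs_mul_le' hAt1 hfyub)
  have hzcrude : |zz - α| ≤ Kc * (E * E) := by
    rw [hzzα]
    calc |Num / f1 x| ≤ (M * (E * E) + 2 * M * (M * (K1 * (E * E)))) / (m / 2) :=
      abs_div_le' hNumcrude hf1xlb (by linarith)
    _ = (2 * M / m + 4 * M ^ 2 * K1 / m) * (E * E) := by field_simp; ring
    _ = Kc * (E * E) := by rw [hKcdef, hK1def]
  have hzE : |zz - α| ≤ E := by
    calc |zz - α| ≤ Kc * (E * E) := hzcrude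
    _ = Kc * E * E := by ring
    _ ≤ 1 * E := mul_le_mul_of_nonneg_right hKcE hEnn
    _ = E := one_mul E
  have hzJ : zz ∈ J := hmemJ zz (le_trans hzE hEr)
  -- ### refined fourth-order bound for zz - α
  have hxE : |x - α| ≤ E := le_of_eq hEdef.symm
  have hE2 : E * E ≤ 1 := by
    calc E * E ≤ 1 * 1 := mul_le_mul hE1 hE1 hEnn one_pos.le
    _ = 1 := by norm_num
  have hMf1α : |f1 α| ≤ M := hMf1 α hαJ
  have hMf2α : |f2 α| ≤ M := hMf2 α hαJ
  -- remainder of the second-order Taylor expansion of f at α evaluated at yy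
  obtain ⟨ρ, hρdef⟩ : ∃ ρ : ℝ, ρ = f yy - f1 α * (yy - α) := ⟨_, rfl⟩
  have hfy : f yy = f1 α * (N / f1 x) + ρ := by rw [hρdef, ← hyyα]; ring
  have hρub : |ρ| ≤ c1 * (E * E * (E * E)) := by
    have h1 := htay2f yy hyJ α hαJ
    rw [hroot] at h1
    have hid : ρ = (f yy - 0 - f1 α * (yy - α) - f2 α / 2 * (yy - α) ^ 2)
        + f2 α / 2 * (yy - α) ^ 2 := by rw [hρdef]; ring
    have h2 : |f2 α / 2 * (yy - α) ^ 2| ≤ M / 2 * (K1 * (E * E)) ^ 2 := by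
      have e1 : |f2 α / 2 * (yy - α) ^ 2| = |f2 α| / 2 * |yy - α| ^ 2 := by
        rw [abs_mul, abs_div, abs_pow, abs_two]
      rw [e1]
      exact mul_le_mul (by linarith : |f2 α| / 2 ≤ M / 2)
        (pow_le_pow_left₀ (abs_nonneg _) hyub 2) (by positivity) (by positivity)
    have h3 : |yy - α| ^ 3 ≤ (K1 * (E * E)) ^ 3 := pow_le_pow_left₀ (abs_nonneg _) hyub 3
    have h4 : 0 ≤ K1 ^ 3 * (E * E) ^ 2 * (1 - E * E) :=
      mul_nonneg (mul_nonneg (pow_nonneg hK10.le 3) (sq_nonneg _)) (by linarith)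
    calc |ρ| ≤ |f yy - 0 - f1 α * (yy - α) - f2 α / 2 * (yy - α) ^ 2|
        + |f2 α / 2 * (yy - α) ^ 2| := by rw [hid]; exact abs_add_le _ _
    _ ≤ M * (K1 * (E * E)) ^ 3 + M / 2 * (K1 * (E * E)) ^ 2 := by
        refine add_le_add (le_trans h1 ?_) h2
        exact mul_le_mul_of_nonneg_left h3 hM0.le
    _ ≤ c1 * (E * E * (E * E)) := by
        rw [hc1def]
        have h5 : 0 ≤ M * (K1 ^ 3 * (E * E) ^ 2 * (1 - E * E)) := mul_nonneg hM0.le h4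
        have h6 : 0 ≤ M * (K1 ^ 2 * (E * E * (E * E))) := by positivity
        linarith only [h5, h6]
  -- Taylor data at x
  have htf1 : |f1 x - f1 α - f2 α * (x - α)| ≤ M * E * E := by
    have h1 := htay1f1 x hxJ α hαJ
    rwa [← hEdef] at h1
  have htf2 : |f x - f1 α * (x - α) - f2 α / 2 * (x - α) ^ 2| ≤ M * E ^ 3 := by
    have h1 := htay2f x hxJ α hαJ
    rw [hroot, ← hEdef] at h1
    have hid : f x - 0 - f1 α * (x - α) - f2 α / 2 * (x - α) ^ 2
        = f x - f1 α * (x - α) - f2 α / 2 * (x - α) ^ 2 := by ring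
    rwa [hid] at h1
  have hfxmid : |f x - f1 α * (x - α)| ≤ M * (E * E) := by
    have h1 := htay1f x hxJ α hαJ
    rw [hroot, ← hEdef] at h1
    have hid : f x - 0 - f1 α * (x - α) = f x - f1 α * (x - α) := by ring
    rw [hid] at h1
    linarith
  -- step: N is close to (f2 α / 2) e²
  have h13 : |N - f2 α / 2 * (x - α) ^ 2| ≤ 2 * M * (E * E * E) := by
    have hid : N - f2 α / 2 * (x - α) ^ 2
        = (x - α) * (f1 x - f1 α - f2 α * (x - α))
          - (f x - f1 α * (x - α) - f2 α / 2 * (x - α) ^ 2) := by rw [hNdef]; ring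
    calc |N - f2 α / 2 * (x - α) ^ 2|
        ≤ |(x - α) * (f1 x - f1 α - f2 α * (x - α))|
          + |f x - f1 α * (x - α) - f2 α / 2 * (x - α) ^ 2| := by rw [hid]; exact abs_sub _ _
    _ ≤ E * (M * E * E) + M * E ^ 3 := add_le_add (abs_mul_le' hxE htf1) htf2
    _ = 2 * M * (E * E * E) := by ring
  -- step: bound for H
  obtain ⟨H, hHdef⟩ : ∃ H : ℝ, H = 2 * f1 α ^ 2 * N - f2 α * (x - α) * (f x * f1 x) := ⟨_, rfl⟩
  have hfx1 : |f x * f1 x - (x - α) * f1 α ^ 2| ≤ 2 * (M ^ 2 * (E * E)) := by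
    have hid : f x * f1 x - (x - α) * f1 α ^ 2
        = f x * (f1 x - f1 α) + f1 α * (f x - f1 α * (x - α)) := by ring
    have h1 : |f1 x - f1 α| ≤ M * E := by
      have := hlipf1 x hxJ α hαJ; rwa [← hEdef] at this
    calc |f x * f1 x - (x - α) * f1 α ^ 2|
        ≤ |f x * (f1 x - f1 α)| + |f1 α * (f x - f1 α * (x - α))| := by
          rw [hid]; exact abs_add_le _ _
    _ ≤ M * E * (M * E) + M * (M * (E * E)) :=
        add_le_add (abs_mul_le' hfxub h1) (abs_mul_le' hMf1α hfxmid)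
    _ = 2 * (M ^ 2 * (E * E)) := by ring
  have hHub : |H| ≤ 6 * (M ^ 3 * (E * E * E)) := by
    have hid : H = 2 * f1 α ^ 2 * (N - f2 α / 2 * (x - α) ^ 2)
        - f2 α * (x - α) * (f x * f1 x - (x - α) * f1 α ^ 2) := by rw [hHdef]; ring
    have h1 : |f1 α ^ 2| ≤ M ^ 2 := by
      rw [abs_pow]; exact pow_le_pow_left₀ (abs_nonneg _) hMf1α 2
    have h2 : |2 * f1 α ^ 2| ≤ 2 * M ^ 2 := by
      rw [abs_mul, abs_two]; linarith [h1]
    have h3 : |f2 α * (x - α)| ≤ M * E := abs_mul_le' hMf2α hxE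
    calc |H| ≤ |2 * f1 α ^ 2 * (N - f2 α / 2 * (x - α) ^ 2)|
        + |f2 α * (x - α) * (f x * f1 x - (x - α) * f1 α ^ 2)| := by
          rw [hid]; exact abs_sub _ _
    _ ≤ 2 * M ^ 2 * (2 * M * (E * E * E)) + M * E * (2 * (M ^ 2 * (E * E))) :=
        add_le_add (abs_mul_le' h2 h13) (abs_mul_le' h3 hfx1)
    _ = 6 * (M ^ 3 * (E * E * E)) := by ring
  -- step: bound for G
  obtain ⟨G, hGdef⟩ : ∃ G : ℝ, G = 2 * f1 α * f yy - f2 α * (x - α) * f x := ⟨_, rfl⟩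
  have hGid : G = H / f1 x + 2 * f1 α * ρ := by
    rw [hGdef, hfy, hHdef]
    field_simp
    ring
  have hGub : |G| ≤ K7 * (E * E * E) := by
    have h1 : |H / f1 x| ≤ (6 * (M ^ 3 * (E * E * E))) / (m / 2) :=
      abs_div_le' hHub hf1xlb (by linarith)
    have h2 : |2 * f1 α * ρ| ≤ 2 * M * (c1 * (E * E * (E * E))) := by
      refine abs_mul_le' ?_ hρub
      rw [abs_mul, abs_two]; linarith [hMf1α]
    have h3 : 0 ≤ 2 * M * c1 * (E * E * E) * (1 - E) :=
      mul_nonneg (mul_nonneg (mul_nonneg (mul_nonneg (by norm_num) hM0.le) hc10.le)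
        (by positivity)) (by linarith)
    calc |G| ≤ |H / f1 x| + |2 * f1 α * ρ| := by rw [hGid]; exact abs_add_le _ _
    _ ≤ (6 * (M ^ 3 * (E * E * E))) / (m / 2) + 2 * M * (c1 * (E * E * (E * E))) :=
        add_le_add h1 h2
    _ = 12 * M ^ 3 / m * (E * E * E) + 2 * M * (c1 * (E * E * (E * E))) := by
        field_simp; ring
    _ ≤ K7 * (E * E * E) := by rw [hK7def]; linarith only [h3]
  -- step: ae - 2 m₁ t1
  have h16 : |f2 α * (x - α) - 2 * f1 α * t1| ≤ K6 * (E * E) := by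
    have hid : f2 α * (x - α) - 2 * f1 α * t1 = -G / f x := by
      rw [hGdef, ht1def]
      field_simp
      try ring
    rw [hid, neg_div, abs_neg]
    calc |G / f x| ≤ (K7 * (E * E * E)) / (m / 2 * E) := abs_div_le' hGub hfxlb (by positivity)
    _ = K6 * (E * E) := by rw [hK6def]; field_simp
  -- step: f1 x − A(t1) f1 α
  have h17 : |f1 x - A t1 * f1 α| ≤ K5 * (E * E) := by
    have hid : f1 x - A t1 * f1 α = (f1 x - f1 α - f2 α * (x - α))
        + (f2 α * (x - α) - 2 * f1 α * t1) - (A t1 - 1 - 2 * t1) * f1 α := by ring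
    have h1 : |(A t1 - 1 - 2 * t1) * f1 α| ≤ M * |t1| * |t1| * M :=
      abs_mul_le' (htayA t1 ht1l) hMf1α
    have h2 : |t1| * |t1| ≤ Kt * E * (Kt * E) :=
      mul_le_mul ht1ub ht1ub (abs_nonneg _) (by positivity)
    calc |f1 x - A t1 * f1 α|
        ≤ |(f1 x - f1 α - f2 α * (x - α)) + (f2 α * (x - α) - 2 * f1 α * t1)|
          + |(A t1 - 1 - 2 * t1) * f1 α| := by rw [hid]; exact abs_sub _ _
    _ ≤ (|f1 x - f1 α - f2 α * (x - α)| + |f2 α * (x - α) - 2 * f1 α * t1|)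
          + M * |t1| * |t1| * M := add_le_add (abs_add_le _ _) h1
    _ ≤ (M * E * E + K6 * (E * E)) + M * (Kt * E * (Kt * E)) * M := by
        refine add_le_add (add_le_add htf1 h16) ?_
        have h2' := mul_le_mul_of_nonneg_left h2 (mul_nonneg hM0.le hM0.le)
        linarith only [h2']
    _ ≤ K5 * (E * E) := by rw [hK5def]; exact le_of_eq (by ring)
  -- step: refined bound for Num
  have hNumub : |Num| ≤ K8 * (E * E * (E * E)) := by
    have hid : Num = N * (f1 x - A t1 * f1 α) / f1 x - A t1 * ρ := by
      rw [hNumdef, hfy]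
      field_simp
      ring
    have h1 : |N * (f1 x - A t1 * f1 α)| ≤ M * (E * E) * (K5 * (E * E)) :=
      abs_mul_le' hNub h17
    have h2 : |N * (f1 x - A t1 * f1 α) / f1 x| ≤ (M * (E * E) * (K5 * (E * E))) / (m / 2) :=
      abs_div_le' h1 hf1xlb (by linarith)
    have h3 : |A t1 * ρ| ≤ 2 * M * (c1 * (E * E * (E * E))) := abs_mul_le' hAt1 hρub
    calc |Num| ≤ |N * (f1 x - A t1 * f1 α) / f1 x| + |A t1 * ρ| := by
          rw [hid]; exact abs_sub _ _
    _ ≤ (M * (E * E) * (K5 * (E * E))) / (m / 2) + 2 * M * (c1 * (E * E * (E * E))) :=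
        add_le_add h2 h3
    _ = K8 * (E * E * (E * E)) := by rw [hK8def]; field_simp
  have hzub : |zz - α| ≤ Kz * (E * E * (E * E)) := by
    rw [hzzα]
    calc |Num / f1 x| ≤ (K8 * (E * E * (E * E))) / (m / 2) :=
      abs_div_le' hNumub hf1xlb (by linarith)
    _ = Kz * (E * E * (E * E)) := by rw [hKzdef]; field_simp
  -- ### final step
  by_cases hzα : zz = α
  · -- if zz = α the next iterate is exactly α
    have hΦ0 : Φ x - α = 0 := by
      rw [hΦ x, ← hzzdef, hzα, hroot]
      simp
    rw [hΦ0, abs_zero]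
    positivity
  · -- main case
    have hyα : yy ≠ α := by
      intro h
      apply hzy
      have hfy0 : f (y x) = 0 := by rw [← hyydef, h, hroot]
      rw [hz x, hfy0]
      simp
    have hzzyy : zz ≠ yy := by rw [hzzdef, hyydef]; exact hzy
    have hzzx : zz ≠ x := by rw [hzzdef]; exact hzx
    have hzzα0 : zz - α ≠ 0 := sub_ne_zero.mpr hzα
    -- all relevant points lie in Icc (α - E) (α + E)
    have hIE : Set.Icc (α - E) (α + E) ⊆ J := by
      intro t ht
      refine hmemJ t ?_
      have h1 := ht.1; have h2 := ht.2
      refine le_trans (abs_le.mpr ⟨by linarith, by linarith⟩) hEr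
    have hderE : ∀ t ∈ Set.Icc (α - E) (α + E), HasDerivAt f (f1 t) t :=
      fun t ht => hderJ t (hIE ht)
    have hderE1 : ∀ t ∈ Set.Icc (α - E) (α + E), HasDerivAt f1 (f2 t) t :=
      fun t ht => hderJ1 t (hIE ht)
    have hxmem : x ∈ Set.Icc (α - E) (α + E) := by
      have h1 := abs_le.mp (le_of_eq hEdef.symm)
      exact ⟨by linarith [h1.1], by linarith [h1.2]⟩
    have hymem : yy ∈ Set.Icc (α - E) (α + E) := by
      have h1 := abs_le.mp hyE
      exact ⟨by linarith [h1.1], by linarith [h1.2]⟩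
    have hzmem : zz ∈ Set.Icc (α - E) (α + E) := by
      have h1 := abs_le.mp hzE
      exact ⟨by linarith [h1.1], by linarith [h1.2]⟩
    have hαmem : α ∈ Set.Icc (α - E) (α + E) := by
      exact ⟨by linarith, by linarith⟩
    obtain ⟨ξ₁, hξ₁I, hξ₁⟩ := dd2_mvt hderE hderE1 hzmem hymem hαmem hzzyy hzα hyα
    obtain ⟨ξ₂, hξ₂I, hξ₂⟩ := dd2r_mvt hderE hderE1 hzmem hxmem hzzx
    have hzzx0 : zz - x ≠ 0 := sub_ne_zero.mpr hzzx
    have hzzyy0 : zz - yy ≠ 0 := sub_ne_zero.mpr hzzyy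
    -- rewrite the denominator D x
    have e0 : (f zz - f x) / (zz - x) - f1 x = (f zz - f x - f1 x * (zz - x)) / (zz - x) := by
      field_simp
    have e1 : (f zz - f x) / (zz - x) - f1 x = f2 ξ₂ / 2 * (zz - x) := by
      rw [e0, hξ₂]
      field_simp
    have hsecond : ((f zz - f x) / (zz - x) - f1 x) / (zz - x) * (zz - yy)
        = f2 ξ₂ / 2 * (zz - yy) := by
      rw [e1]
      field_simp
    have hfirst : (f zz - f yy) / (zz - yy) = f zz / (zz - α) + f2 ξ₁ / 2 * (yy - α) := by
      have h1 := hξ₁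
      rw [hroot, sub_zero] at h1
      linarith
    have hKey : D x - f zz / (zz - α) = f2 ξ₁ / 2 * (yy - α) + f2 ξ₂ / 2 * (zz - yy) := by
      rw [hD x, ← hzzdef, ← hyydef, hsecond, hfirst]
      ring
    -- bounds for the correction
    have hξ₁J : ξ₁ ∈ J := hIE hξ₁I
    have hξ₂J : ξ₂ ∈ J := hIE hξ₂I
    have hMf2ξ₁ : |f2 ξ₁| ≤ M := hMf2 ξ₁ hξ₁J
    have hξdiff : |f2 ξ₂ - f2 ξ₁| ≤ M * (2 * E) := by
      have h1 := hlipf2 ξ₂ hξ₂J ξ₁ hξ₁J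
      have h2 := abs_le.mp (show |ξ₁ - α| ≤ E by
        have := hξ₁I; exact abs_le.mpr ⟨by linarith [this.1], by linarith [this.2]⟩)
      have h3 := abs_le.mp (show |ξ₂ - α| ≤ E by
        have := hξ₂I; exact abs_le.mpr ⟨by linarith [this.1], by linarith [this.2]⟩)
      have h4 : |ξ₂ - ξ₁| ≤ 2 * E := abs_le.mpr ⟨by linarith, by linarith⟩
      calc |f2 ξ₂ - f2 ξ₁| ≤ M * |ξ₂ - ξ₁| := h1
      _ ≤ M * (2 * E) := mul_le_mul_of_nonneg_left h4 hM0.le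
    have hzyyub : |zz - yy| ≤ (Kc + K1) * (E * E) := by
      have hid : zz - yy = (zz - α) - (yy - α) := by ring
      rw [hid]
      calc |(zz - α) - (yy - α)| ≤ |zz - α| + |yy - α| := abs_sub _ _
      _ ≤ Kc * (E * E) + K1 * (E * E) := add_le_add hzcrude hyub
      _ = (Kc + K1) * (E * E) := by ring
    have hΔub : |D x - f zz / (zz - α)| ≤ K9 * (E * E * E) := by
      have hid : f2 ξ₁ / 2 * (yy - α) + f2 ξ₂ / 2 * (zz - yy)
          = f2 ξ₁ / 2 * (zz - α) + (f2 ξ₂ - f2 ξ₁) / 2 * (zz - yy) := by ring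
      rw [hKey, hid]
      have h1 : |f2 ξ₁ / 2 * (zz - α)| ≤ M / 2 * (Kz * (E * E * (E * E))) := by
        refine abs_mul_le' ?_ hzub
        rw [abs_div, abs_two]
        linarith
      have h2 : |(f2 ξ₂ - f2 ξ₁) / 2 * (zz - yy)|
          ≤ M * (2 * E) / 2 * ((Kc + K1) * (E * E)) := by
        refine abs_mul_le' ?_ hzyyub
        rw [abs_div, abs_two]
        linarith
      have h9 : 0 ≤ M * Kz * (E * E * E) * (2 - E) := by
        refine mul_nonneg (mul_nonneg (mul_nonneg hM0.le hKz0.le) (by positivity)) (by linarith)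
      calc |f2 ξ₁ / 2 * (zz - α) + (f2 ξ₂ - f2 ξ₁) / 2 * (zz - yy)|
          ≤ |f2 ξ₁ / 2 * (zz - α)| + |(f2 ξ₂ - f2 ξ₁) / 2 * (zz - yy)| := abs_add_le _ _
      _ ≤ M / 2 * (Kz * (E * E * (E * E))) + M * (2 * E) / 2 * ((Kc + K1) * (E * E)) :=
          add_le_add h1 h2
      _ ≤ K9 * (E * E * E) := by rw [hK9def]; linarith only [h9]
    -- lower bound for the divided difference f[zz, α]
    have hPlb : m - m / 4 ≤ |f zz / (zz - α)| := by
      have h1 := htay1f zz hzJ α hαJ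
      rw [hroot] at h1
      have h2 : f zz / (zz - α) - f1 α = (f zz - 0 - f1 α * (zz - α)) / (zz - α) := by
        field_simp
        ring
      have h3 : |f zz / (zz - α) - f1 α| ≤ M * |zz - α| := by
        rw [h2]
        have h4 := abs_div_le' h1 (le_refl |zz - α|) (abs_pos.mpr hzzα0)
        calc |(f zz - 0 - f1 α * (zz - α)) / (zz - α)|
            ≤ M * |zz - α| * |zz - α| / |zz - α| := h4
        _ = M * |zz - α| := by
            field_simp
      have h5 : M * |zz - α| ≤ m / 4 := by
        have h6 := mul_le_mul_of_nonneg_left hzcrude hM0.le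
        have h7 := mul_le_mul_of_nonneg_right hMKcE hEnn
        have h8 : 0 ≤ m / 4 * (1 - E) := mul_nonneg (by linarith) (by linarith)
        linarith only [h6, h7, h8]
      have h6 := abs_sub_abs_le_abs_sub (f1 α) (f zz / (zz - α))
      rw [abs_sub_comm] at h6
      have h7 : m = |f1 α| := hmdef
      linarith
    have hDlb : m / 2 ≤ |D x| := by
      have h1 := abs_sub_abs_le_abs_sub (f zz / (zz - α)) (D x)
      rw [abs_sub_comm] at h1
      have h2 : |D x - f zz / (zz - α)| ≤ m / 4 := by
        refine le_trans hΔub ?_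
        have h3 : 0 ≤ K9 * E * (1 - E * E) := by
          refine mul_nonneg (mul_nonneg hK90.le hEnn) (by linarith)
        linarith only [hK9E, h3]
      linarith
    -- final computation
    have hΦid : Φ x - α = (zz - α) * ((D x - f zz / (zz - α)) / D x) := by
      rw [hΦ x, ← hzzdef]
      field_simp
      ring
    rw [hΦid]
    have h1 : |(D x - f zz / (zz - α)) / D x| ≤ (K9 * (E * E * E)) / (m / 2) :=
      abs_div_le' hΔub hDlb (by linarith)
    calc |(zz - α) * ((D x - f zz / (zz - α)) / D x)|
        ≤ Kz * (E * E * (E * E)) * ((K9 * (E * E * E)) / (m / 2)) := abs_mul_le' hzub h1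
    _ = 2 * Kz * K9 / m * E ^ 7 := by field_simp
    _ ≤ C * E ^ 7 := by
        rw [hCdef]
        linarith only [pow_nonneg hEnn 7]
end
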